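/- arXiv:math/9507205 — 2 statements merged into one kernel-verified Lean document; each statement's English description precedes it below -/
import Mathlib

section
/- Let n ≥ 2 and r ≥ 1 be integers. The group BT_{n,r} consists exactly of those elements f ∈ T_{n,r} that map p_r(Δ_n) onto itself, where p_r : ℝ → S_r is the quotient map. -/
noncomputable section

/-- `ℤ[1/n]` realized as a subset of `ℝ`: all reals of the form `a * n^b` with `a b : ℤ`. -/
def zpows (n : ℕ) : Set ℝ := {x : ℝ | ∃ a b : ℤ, x = (a : ℝ) * (n : ℝ) ^ b}

/-- The defining properties of the (unique) ring homomorphism `φₙ : ℤ[1/n] → ℤ/(n-1)ℤ`,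
expressed for a function `φ : ℝ → ZMod (n-1)` restricted to the subset `zpows n`. -/
def IsPhi (n : ℕ) (φ : ℝ → ZMod (n - 1)) : Prop :=
  (∀ x ∈ zpows n, ∀ y ∈ zpows n, φ (x + y) = φ x + φ y) ∧
  (∀ x ∈ zpows n, ∀ y ∈ zpows n, φ (x * y) = φ x * φ y) ∧
  φ 1 = 1

/-- Piecewise linearity data on the circle `ℝ/rℤ`, expressed for an `r`-periodic lift
`F : ℝ → ℝ`: there is an `r`-periodic break set `B ⊆ ℤ[1/n]`, finite in each period,
off which `F` is locally affine with slopes integral powers of `n`. -/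
def CircPL (n : ℕ) (r : ℝ) (F : ℝ → ℝ) : Prop :=
  ∃ B : Set ℝ,
    (B ∩ Set.Ico (0 : ℝ) r).Finite ∧ (∀ x ∈ B, x + r ∈ B ∧ x - r ∈ B) ∧ B ⊆ zpows n ∧
    ∀ x ∉ B, ∃ (k : ℤ) (c : ℝ), ∃ ε > 0, ∀ y : ℝ, |y - x| < ε → F y = (n : ℝ) ^ k * y + c

/-- Membership in `T_{n,r}`: an orientation-preserving homeomorphism of the circle
`S_r = ℝ/rℤ` (encoded by a strictly monotone surjective lift commuting with `x ↦ x + r`),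
piecewise linear with finitely many breaks, all breaks in `ℤ[1/n]`, all slopes integral
powers of `n`, and mapping (the image of) `ℤ[1/n]` into itself. -/
def MemT (n : ℕ) (r : ℝ) (f : AddCircle r → AddCircle r) : Prop :=
  ∃ F : ℝ → ℝ,
    (∀ x : ℝ, f (x : AddCircle r) = ((F x : ℝ) : AddCircle r)) ∧
    (∀ x : ℝ, F (x + r) = F x + r) ∧
    StrictMono F ∧ Function.Surjective F ∧ CircPL n r F ∧
    (∀ q ∈ zpows n, F q ∈ zpows n)

/-- The generating set of `BT_{n,r}`: elements of `T_{n,r}` that restrict to the identity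
on some nonempty open arc of `S_r`. -/
def BTgen (n : ℕ) (r : ℝ) : Set (Equiv.Perm (AddCircle r)) :=
  {f : Equiv.Perm (AddCircle r) | MemT n r ⇑f ∧
    ∃ u v : ℝ, u < v ∧ ∀ w ∈ Set.Ioo u v, f ((w : ℝ) : AddCircle r) = ((w : ℝ) : AddCircle r)}

/-- `BT_{n,r}`, the subgroup of `T_{n,r}` generated by the elements that are the identity
on some nonempty open arc. -/
def BTgrp (n : ℕ) (r : ℝ) : Subgroup (Equiv.Perm (AddCircle r)) :=
  Subgroup.closure (BTgen n r)

/-- The image `p_r(Δₙ)` of `Δₙ = ker φₙ` in the circle `S_r`. -/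
def DeltaCircle (n : ℕ) (r : ℝ) (φ : ℝ → ZMod (n - 1)) : Set (AddCircle r) :=
  {z : AddCircle r | ∃ q : ℝ, q ∈ zpows n ∧ φ q = 0 ∧ z = ((q : ℝ) : AddCircle r)}


namespace St8

variable {n : ℕ}


variable {n : ℕ}

lemma npos (hn : 2 ≤ n) : (0:ℝ) < (n:ℝ) := by positivity
lemma none' (hn : 2 ≤ n) : (1:ℝ) < (n:ℝ) := by exact_mod_cast hn.trans_lt' one_lt_two
lemma nne (hn : 2 ≤ n) : (n:ℝ) ≠ 0 := ne_of_gt (npos hn)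

/-- canonical representation with nonneg exponent in denominator -/
lemma zpows_rep (hn : 2 ≤ n) {x : ℝ} (hx : x ∈ zpows n) :
    ∃ (a : ℤ) (e : ℕ), x = (a : ℝ) * ((n : ℝ) ^ e)⁻¹ := by
  obtain ⟨a, b, rfl⟩ := hx
  rcases le_or_gt 0 b with hb | hb
  · lift b to ℕ using hb
    exact ⟨a * n ^ b, 0, by push_cast [zpow_natCast]; ring⟩
  · refine ⟨a, (-b).toNat, ?_⟩
    have : ((-b).toNat : ℤ) = -b := Int.toNat_of_nonneg (by omega)
    rw [← zpow_natCast, ← zpow_neg]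
    norm_num [this]

lemma zpows_of_rep {a : ℤ} {e : ℕ} : (a : ℝ) * ((n : ℝ) ^ e)⁻¹ ∈ zpows n :=
  ⟨a, -e, by rw [zpow_neg, zpow_natCast]⟩

lemma zpows_intCast (a : ℤ) : (a : ℝ) ∈ zpows n := ⟨a, 0, by norm_num⟩
lemma zpows_zero : (0:ℝ) ∈ zpows n := by simpa using zpows_intCast (n := n) 0
lemma zpows_one : (1:ℝ) ∈ zpows n := by simpa using zpows_intCast (n := n) 1
lemma zpows_natCast (m : ℕ) : (m : ℝ) ∈ zpows n := by
  simpa using zpows_intCast (n := n) m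
lemma zpows_zpow (k : ℤ) : (n:ℝ) ^ k ∈ zpows n := ⟨1, k, by norm_num⟩

lemma zpows_mul (hn : 2 ≤ n) {x y : ℝ} (hx : x ∈ zpows n) (hy : y ∈ zpows n) :
    x * y ∈ zpows n := by
  obtain ⟨a, b, rfl⟩ := hx
  obtain ⟨c, d, rfl⟩ := hy
  exact ⟨a * c, b + d, by push_cast [zpow_add₀ (nne hn)]; ring⟩

lemma zpows_add (hn : 2 ≤ n) {x y : ℝ} (hx : x ∈ zpows n) (hy : y ∈ zpows n) :
    x + y ∈ zpows n := by
  obtain ⟨a, e, rfl⟩ := zpows_rep hn hx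
  obtain ⟨c, d, rfl⟩ := zpows_rep hn hy
  have he : ((n:ℝ) ^ e) ≠ 0 := by positivity
  have hd : ((n:ℝ) ^ d) ≠ 0 := by positivity
  have : (a : ℝ) * ((n : ℝ) ^ e)⁻¹ + (c : ℝ) * ((n : ℝ) ^ d)⁻¹
      = ((a * n ^ d + c * n ^ e : ℤ) : ℝ) * ((n:ℝ) ^ (e + d))⁻¹ := by
    push_cast
    rw [pow_add]
    field_simp
  rw [this]
  exact zpows_of_rep

lemma zpows_neg {x : ℝ} (hx : x ∈ zpows n) : -x ∈ zpows n := by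
  obtain ⟨a, b, rfl⟩ := hx; exact ⟨-a, b, by push_cast; ring⟩

lemma zpows_sub (hn : 2 ≤ n) {x y : ℝ} (hx : x ∈ zpows n) (hy : y ∈ zpows n) :
    x - y ∈ zpows n := by
  rw [sub_eq_add_neg]; exact zpows_add hn hx (zpows_neg hy)

/-- density of zpows -/
lemma zpows_dense (hn : 2 ≤ n) {x y : ℝ} (hxy : x < y) :
    ∃ q ∈ zpows n, x < q ∧ q < y := by
  obtain ⟨e, he⟩ := pow_unbounded_of_one_lt (y - x)⁻¹ (none' hn)
  have hne : (0:ℝ) < (n:ℝ) ^ e := by positivity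
  have hlt : ((n:ℝ) ^ e)⁻¹ < y - x := by
    rw [inv_lt_comm₀ hne (by linarith)]
    exact he
  refine ⟨(⌊x * (n:ℝ) ^ e⌋ + 1 : ℤ) * ((n:ℝ) ^ e)⁻¹, zpows_of_rep, ?_, ?_⟩
  · have h2 := Int.lt_floor_add_one (x * (n:ℝ) ^ e)
    have : x * (n:ℝ) ^ e * ((n:ℝ) ^ e)⁻¹ < ((⌊x * (n:ℝ) ^ e⌋ + 1 : ℤ) : ℝ) * ((n:ℝ) ^ e)⁻¹ := by
      apply mul_lt_mul_of_pos_right _ (by positivity)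
      push_cast; linarith
    rwa [mul_inv_cancel_right₀ (ne_of_gt hne)] at this
  · have h1 : (⌊x * (n:ℝ) ^ e⌋ : ℝ) ≤ x * (n:ℝ) ^ e := Int.floor_le _
    have : ((⌊x * (n:ℝ) ^ e⌋ + 1 : ℤ) : ℝ) * ((n:ℝ) ^ e)⁻¹ ≤ x + ((n:ℝ) ^ e)⁻¹ := by
      push_cast
      rw [add_mul]
      have : (⌊x * (n:ℝ) ^ e⌋ : ℝ) * ((n:ℝ) ^ e)⁻¹ ≤ x := by
        have := mul_le_mul_of_nonneg_right h1 (le_of_lt (inv_pos.mpr hne))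
        rwa [mul_inv_cancel_right₀ (ne_of_gt hne)] at this
      linarith
    linarith


variable {φ : ℝ → ZMod (n-1)} (hn : 2 ≤ n) (hφ : IsPhi n φ)

section Phi
include hn hφ

lemma phi_zero : φ 0 = 0 := by
  have := hφ.1 0 zpows_zero 0 zpows_zero
  simpa using this.symm

lemma phi_natCast (m : ℕ) : φ (m : ℝ) = (m : ZMod (n-1)) := by
  induction m with
  | zero => simpa using phi_zero hn hφ
  | succ k ih =>
      have := hφ.1 (k:ℝ) (zpows_natCast k) 1 zpows_one
      push_cast
      rw [this, ih, hφ.2.2]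

lemma phi_neg {x : ℝ} (hx : x ∈ zpows n) : φ (-x) = - φ x := by
  have := hφ.1 x hx (-x) (zpows_neg hx)
  simp only [add_neg_cancel] at this
  rw [phi_zero hn hφ] at this
  linear_combination -this

lemma phi_intCast (a : ℤ) : φ (a : ℝ) = (a : ZMod (n-1)) := by
  rcases le_or_gt 0 a with h | h
  · lift a to ℕ using h; exact_mod_cast phi_natCast hn hφ a
  · have : (a : ℝ) = -(((-a).toNat : ℕ) : ℝ) := by
      have h2 : ((-a).toNat : ℤ) = -a := Int.toNat_of_nonneg (by omega)
      have : (((-a).toNat : ℤ) : ℝ) = ((-a : ℤ) : ℝ) := by rw [h2]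
      push_cast at this
      linarith
    rw [this, phi_neg hn hφ (zpows_natCast _), phi_natCast hn hφ]
    have : (((-a).toNat : ℕ) : ℤ) = -a := Int.toNat_of_nonneg (by omega)
    rw [show ((((-a).toNat : ℕ)) : ZMod (n-1)) = (((-a).toNat : ℤ) : ZMod (n-1)) by push_cast; ring,
      this]
    push_cast
    ring

lemma phi_n : φ (n : ℝ) = 1 := by
  rw [phi_natCast hn hφ]
  have : (n : ZMod (n-1)) = ((n - 1 : ℕ) : ZMod (n-1)) + 1 := by
    have : n = (n-1) + 1 := by omega
    rw [this]; push_cast; ring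
  rw [this, ZMod.natCast_self]; ring

lemma phi_pow (e : ℕ) : φ ((n : ℝ) ^ e) = 1 := by
  induction e with
  | zero => simpa using hφ.2.2
  | succ k ih =>
      have := hφ.2.1 ((n:ℝ)^k) (by simpa using zpows_zpow (n := n) k) (n:ℝ)
        (by simpa using zpows_natCast (n := n) n)
      rw [pow_succ, this, ih, phi_n hn hφ, one_mul]

lemma phi_zpow (k : ℤ) : φ ((n : ℝ) ^ k) = 1 := by
  rcases le_or_gt 0 k with h | h
  · lift k to ℕ using h
    rw [zpow_natCast]; exact phi_pow hn hφ k
  · have h1 : φ ((n:ℝ) ^ k) * φ ((n:ℝ) ^ (-k)) = 1 := by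
      have := hφ.2.1 ((n:ℝ)^k) (zpows_zpow k) ((n:ℝ)^(-k)) (zpows_zpow (-k))
      rw [← this, ← zpow_add₀ (nne hn)]
      simpa using hφ.2.2
    have h2 : φ ((n:ℝ) ^ (-k)) = 1 := by
      have : (0:ℤ) ≤ -k := by omega
      lift (-k) to ℕ using this with m hm
      rw [zpow_natCast]; exact phi_pow hn hφ m
    rw [h2, mul_one] at h1; exact h1

lemma phi_sub {x y : ℝ} (hx : x ∈ zpows n) (hy : y ∈ zpows n) :
    φ (x - y) = φ x - φ y := by
  have := hφ.1 x hx (-y) (zpows_neg hy)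
  rw [phi_neg hn hφ hy] at this
  rw [sub_eq_add_neg, this]; ring

/-- φ of an affine image -/
lemma phi_affine {x c : ℝ} (hx : x ∈ zpows n) (hc : c ∈ zpows n) (k : ℤ) :
    φ ((n:ℝ) ^ k * x + c) = φ x + φ c := by
  rw [hφ.1 _ (zpows_mul hn (zpows_zpow k) hx) _ hc,
    hφ.2.1 _ (zpows_zpow k) _ hx, phi_zpow hn hφ, one_mul]

/-- an element of zpows with φ = 0 is divisible by n - 1 within zpows -/
lemma phi_div {x : ℝ} (hx : x ∈ zpows n) (h0 : φ x = 0) :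
    ∃ y ∈ zpows n, x = ((n:ℝ) - 1) * y := by
  obtain ⟨a, e, rfl⟩ := zpows_rep hn hx
  have hφx : φ ((a:ℝ) * ((n:ℝ)^e)⁻¹) = (a : ZMod (n-1)) := by
    have hinv : ((n:ℝ)^e)⁻¹ = (n:ℝ) ^ (-(e:ℤ)) := by
      rw [zpow_neg, zpow_natCast]
    rw [hφ.2.1 _ (zpows_intCast a) _ (by rw [hinv]; exact zpows_zpow _),
      phi_intCast hn hφ, hinv, phi_zpow hn hφ, mul_one]
  rw [hφx] at h0
  have hdvd : (((n - 1 : ℕ) : ℤ)) ∣ a :=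
    (ZMod.intCast_zmod_eq_zero_iff_dvd a (n-1)).mp h0
  obtain ⟨w, hw⟩ := hdvd
  refine ⟨(w:ℝ) * ((n:ℝ)^e)⁻¹, zpows_of_rep, ?_⟩
  have : ((n:ℝ) - 1) = (((n - 1 : ℕ) : ℤ) : ℝ) := by
    push_cast [Nat.cast_sub (by omega : 1 ≤ n)]
    norm_num
  rw [this, hw]
  push_cast
  ring

end Phi

/-- the lift-level goodness predicate, matching the tail of `MemT`. -/
def Good (n : ℕ) (r : ℝ) (F : ℝ → ℝ) : Prop :=
  (∀ x : ℝ, F (x + r) = F x + r) ∧ StrictMono F ∧ Function.Surjective F ∧ CircPL n r F ∧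
    (∀ q ∈ zpows n, F q ∈ zpows n)

variable {n : ℕ} {r : ℝ}

lemma good_id (hn : 2 ≤ n) : Good n r (id : ℝ → ℝ) := by
  refine ⟨fun x => rfl, strictMono_id, Function.surjective_id, ⟨∅, by simp, by simp, by simp, ?_⟩,
    fun q hq => hq⟩
  intro x _
  exact ⟨0, 0, 1, one_pos, fun y _ => by simp⟩

section GoodLemmas
variable (hr : 0 < r)

/-- periodicity upgraded to all integers -/
lemma per_zsmul {B : Set ℝ} (hB : ∀ x ∈ B, x + r ∈ B ∧ x - r ∈ B) :
    ∀ (m : ℤ), ∀ x ∈ B, x + m * r ∈ B := by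
  intro m
  induction m using Int.induction_on with
  | zero => simpa using fun x hx => hx
  | succ k ih =>
      intro x hx
      have := (hB _ (ih x hx)).1
      convert this using 1
      push_cast; ring
  | pred k ih =>
      intro x hx
      have := (hB _ (ih x hx)).2
      convert this using 1
      push_cast; ring

lemma equi_zsmul {F : ℝ → ℝ} (hF : ∀ x : ℝ, F (x + r) = F x + r) :
    ∀ (m : ℤ) (x : ℝ), F (x + m * r) = F x + m * r := by
  intro m
  induction m using Int.induction_on with
  | zero => simp
  | succ k ih =>
      intro x
      have h1 : x + ((k : ℤ) + 1 : ℤ) * r = (x + (k : ℤ) * r) + r := by push_cast; ring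
      rw [h1, hF, ih]; push_cast; ring
  | pred k ih =>
      intro x
      have h1 : x + (-(k:ℤ) - 1 : ℤ) * r = (x + (-(k:ℤ)) * r) - r := by push_cast; ring
      have h2 : F ((x + (-(k:ℤ)) * r) - r) = F (x + (-(k:ℤ))*r) - r := by
        have := hF ((x + (-(k:ℤ)) * r) - r)
        rw [sub_add_cancel] at this
        linarith
      rw [h1, h2]
      have h3 := ih x
      push_cast at h3 ⊢
      linarith

include hr in
/-- A periodic set finite in a period is finite on any compact interval. -/
lemma perfin {B : Set ℝ} (hfin : (B ∩ Set.Ico (0:ℝ) r).Finite)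
    (hB : ∀ x ∈ B, x + r ∈ B ∧ x - r ∈ B) (a b : ℝ) :
    (B ∩ Set.Icc a b).Finite := by
  have key : (B ∩ Set.Icc a b) ⊆
      ⋃ j ∈ Finset.Icc ⌊a / r⌋ ⌊b / r⌋, (fun y => y + j * r) '' (B ∩ Set.Ico 0 r) := by
    rintro x ⟨hxB, hxa, hxb⟩
    have hj : x - ⌊x / r⌋ * r ∈ Set.Ico (0:ℝ) r := by
      constructor
      · have := Int.floor_le (x / r)
        have := mul_le_mul_of_nonneg_right this (le_of_lt hr)
        rw [div_mul_cancel₀ _ (ne_of_gt hr)] at this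
        linarith
      · have := Int.lt_floor_add_one (x / r)
        have := mul_lt_mul_of_pos_right this hr
        rw [div_mul_cancel₀ _ (ne_of_gt hr)] at this
        push_cast at this
        linarith
    have hmem : ⌊x / r⌋ ∈ Finset.Icc ⌊a / r⌋ ⌊b / r⌋ := by
      simp only [Finset.mem_Icc]
      exact ⟨Int.floor_le_floor ((div_le_div_iff_of_pos_right hr).mpr hxa),
        Int.floor_le_floor ((div_le_div_iff_of_pos_right hr).mpr hxb)⟩
    refine Set.mem_biUnion hmem ?_
    refine ⟨x - ⌊x / r⌋ * r, ⟨?_, hj⟩, by ring⟩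
    have := per_zsmul hB (-⌊x / r⌋) x hxB
    convert this using 1
    push_cast; ring
  refine Set.Finite.subset ?_ key
  refine Set.Finite.biUnion (Finset.Icc _ _).finite_toSet (fun j _ => hfin.image _)

lemma good_cont {n : ℕ} {F : ℝ → ℝ} (hF : Good n r F) : Continuous F := by
  have : F = ⇑(StrictMono.orderIsoOfSurjective F hF.2.1 hF.2.2.1) := rfl
  rw [this]
  exact (StrictMono.orderIsoOfSurjective F hF.2.1 hF.2.2.1).toHomeomorph.continuous

/-- the constant of a local affine piece of a zpows-preserving map is in zpows -/
lemma const_zpows {n : ℕ} {F : ℝ → ℝ} (hn : 2 ≤ n) (hz : ∀ q ∈ zpows n, F q ∈ zpows n)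
    {x c : ℝ} {k : ℤ} {ε : ℝ} (hε : 0 < ε)
    (h : ∀ y : ℝ, |y - x| < ε → F y = (n : ℝ) ^ k * y + c) : c ∈ zpows n := by
  obtain ⟨q, hq, hq1, hq2⟩ := zpows_dense hn (show x - ε/2 < x + ε/2 by linarith)
  have : F q = (n:ℝ)^k * q + c := h q (by rw [abs_lt]; constructor <;> linarith)
  have hc : c = F q - (n:ℝ)^k * q := by linarith
  rw [hc]
  exact zpows_sub hn (hz q hq) (zpows_mul hn (zpows_zpow k) hq)

include hr in
lemma good_comp {n : ℕ} (hn : 2 ≤ n) {F G : ℝ → ℝ} (hF : Good n r F) (hG : Good n r G) :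
    Good n r (F ∘ G) := by
  obtain ⟨hFe, hFm, hFs, ⟨BF, hBFfin, hBFper, hBFz, hBFl⟩, hFz⟩ := hF
  obtain ⟨hGe, hGm, hGs, ⟨BG, hBGfin, hBGper, hBGz, hBGl⟩, hGz⟩ := hG
  refine ⟨fun x => by show F (G (x+r)) = F (G x) + r; rw [hGe, hFe],
    hFm.comp hGm, hFs.comp hGs, ?_, fun q hq => hFz _ (hGz q hq)⟩
  refine ⟨BG ∪ (G ⁻¹' BF), ?_, ?_, ?_, ?_⟩
  · refine Set.Finite.subset ?_ (Set.inter_subset_inter_left _ (Set.union_subset_union_right BG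
      (subset_refl _)))
    rw [Set.union_inter_distrib_right]
    refine Set.Finite.union (hBGfin) ?_
    have himg : G '' (G ⁻¹' BF ∩ Set.Ico 0 r) ⊆ BF ∩ Set.Icc (G 0) (G 0 + r) := by
      rintro y ⟨x, ⟨hx1, hx2⟩, rfl⟩
      refine ⟨hx1, hGm.monotone hx2.1, ?_⟩
      have : G x ≤ G r := hGm.monotone (le_of_lt hx2.2)
      have hGr : G r = G 0 + r := by simpa using hGe 0
      linarith
    have hfin2 : (G '' (G ⁻¹' BF ∩ Set.Ico 0 r)).Finite :=
      Set.Finite.subset (perfin hr hBFfin hBFper _ _) himg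
    exact Set.Finite.of_finite_image hfin2 (hGm.injective.injOn)
  · intro x hx
    rcases hx with hx | hx
    · exact ⟨Or.inl (hBGper x hx).1, Or.inl (hBGper x hx).2⟩
    · constructor
      · refine Or.inr ?_
        simp only [Set.mem_preimage, hGe]
        exact (hBFper _ hx).1
      · refine Or.inr ?_
        have : G (x - r) = G x - r := by
          have := hGe (x - r); rw [sub_add_cancel] at this; linarith [this]
        simp only [Set.mem_preimage, this]
        exact (hBFper _ hx).2
  · intro x hx
    rcases hx with hx | hx
    · exact hBGz hx
    · -- x = G⁻¹ of a break of F
      by_cases hxG : x ∈ BG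
      · exact hBGz hxG
      · obtain ⟨k, c, ε, hε, hloc⟩ := hBGl x hxG
        have hc : c ∈ zpows n := const_zpows hn hGz hε hloc
        have hGx : G x = (n:ℝ)^k * x + c := hloc x (by simpa using hε)
        have : x = ((n:ℝ)^(-k)) * (G x - c) := by
          rw [hGx, zpow_neg]
          have : ((n:ℝ)^k) ≠ 0 := by
            have : (0:ℝ) < (n:ℝ)^k := by
              apply zpow_pos
              have : (0:ℝ) < n := by positivity
              exact_mod_cast this
            linarith
          field_simp
          ring
        rw [this]
        exact zpows_mul hn (zpows_zpow _) (zpows_sub hn (hBFz hx) hc)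
  · intro x hx
    simp only [Set.mem_union, Set.mem_preimage] at hx
    push_neg at hx
    obtain ⟨k1, c1, ε1, hε1, hloc1⟩ := hBGl x hx.1
    obtain ⟨k2, c2, ε2, hε2, hloc2⟩ := hBFl (G x) hx.2
    have hnk : (0:ℝ) < (n:ℝ)^k1 := by
      apply zpow_pos
      have : (0:ℝ) < n := by positivity
      exact_mod_cast this
    refine ⟨k1 + k2, (n:ℝ)^k2 * c1 + c2, min ε1 (ε2 / (n:ℝ)^k1),
      lt_min hε1 (by positivity), ?_⟩
    intro y hy
    have hy1 : |y - x| < ε1 := lt_of_lt_of_le hy (min_le_left _ _)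
    have hGy : G y = (n:ℝ)^k1 * y + c1 := hloc1 y hy1
    have hGx : G x = (n:ℝ)^k1 * x + c1 := hloc1 x (by simpa using hε1)
    have h2 : |G y - G x| < ε2 := by
      rw [hGy, hGx]
      have : (n:ℝ)^k1 * y + c1 - ((n:ℝ)^k1 * x + c1) = (n:ℝ)^k1 * (y - x) := by ring
      rw [this, abs_mul, abs_of_pos hnk]
      have hy2 : |y - x| < ε2 / (n:ℝ)^k1 := lt_of_lt_of_le hy (min_le_right _ _)
      calc (n:ℝ)^k1 * |y - x| < (n:ℝ)^k1 * (ε2 / (n:ℝ)^k1) := by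
            exact mul_lt_mul_of_pos_left hy2 hnk
        _ = ε2 := by field_simp
    have h3 := hloc2 (G y) h2
    show F (G y) = _
    rw [h3, hGy, zpow_add₀ (nne hn)]
    ring

include hr in
/-- inverse of a good map -/
lemma good_inv {n : ℕ} (hn : 2 ≤ n) {F : ℝ → ℝ} (hF : Good n r F) :
    Good n r (Function.invFun F) ∧ Function.LeftInverse (Function.invFun F) F ∧
      Function.RightInverse (Function.invFun F) F := by
  obtain ⟨hFe, hFm, hFs, ⟨BF, hBFfin, hBFper, hBFz, hBFl⟩, hFz⟩ := hF
  set Fi := Function.invFun F with hFi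
  have hli : Function.LeftInverse Fi F := Function.leftInverse_invFun hFm.injective
  have hri : Function.RightInverse Fi F := Function.rightInverse_invFun hFs
  have hFim : StrictMono Fi := by
    intro y1 y2 h12
    by_contra hcon
    push_neg at hcon
    have := hFm.monotone hcon
    rw [hri y1, hri y2] at this
    exact absurd this (not_le.mpr h12)
  have hnpos : ∀ k : ℤ, (0:ℝ) < (n:ℝ)^k := by
    intro k
    apply zpow_pos
    have : (0:ℝ) < n := by positivity
    exact_mod_cast this
  refine ⟨⟨?_, hFim, hli.surjective, ?_, ?_⟩, hli, hri⟩
  · intro x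
    apply hFm.injective
    rw [hri, hFe, hri]
  · refine ⟨F '' BF, ?_, ?_, ?_, ?_⟩
    · have : F '' BF ∩ Set.Ico 0 r ⊆ F '' (BF ∩ Set.Icc (Fi 0) (Fi 0 + r)) := by
        rintro y ⟨⟨x, hx, rfl⟩, hy1, hy2⟩
        refine ⟨x, ⟨hx, ?_, ?_⟩, rfl⟩
        · by_contra hcon
          push_neg at hcon
          have := hFm hcon
          rw [hri] at this
          linarith
        · by_contra hcon
          push_neg at hcon
          have := hFm hcon
          rw [hFe, hri] at this
          linarith
      exact Set.Finite.subset ((perfin hr hBFfin hBFper _ _).image F) this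
    · rintro y ⟨x, hx, rfl⟩
      exact ⟨⟨x + r, (hBFper x hx).1, (hFe x).symm ▸ rfl⟩,
        ⟨x - r, (hBFper x hx).2, by
          have := hFe (x - r); rw [sub_add_cancel] at this; linarith [this]⟩⟩
    · rintro y ⟨x, hx, rfl⟩
      exact hFz x (hBFz hx)
    · intro y hy
      have hxB : Fi y ∉ BF := by
        intro hcon
        exact hy ⟨Fi y, hcon, hri y⟩
      obtain ⟨k, c, ε, hε, hloc⟩ := hBFl (Fi y) hxB
      have hFx : F (Fi y) = (n:ℝ)^k * (Fi y) + c := hloc _ (by simpa using hε)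
      rw [hri] at hFx
      have hkk1 : ((n:ℝ)^(-k)) * ((n:ℝ)^k) = 1 := by
        rw [← zpow_add₀ (nne hn)]; simp
      have hkk2 : ((n:ℝ)^k) * ((n:ℝ)^(-k)) = 1 := by
        rw [← zpow_add₀ (nne hn)]; simp
      have hy_eq : ((n:ℝ)^(-k)) * y = Fi y + ((n:ℝ)^(-k)) * c := by
        have h := congrArg (fun t => ((n:ℝ)^(-k)) * t) hFx
        rw [h, mul_add, ← mul_assoc, hkk1, one_mul]
      refine ⟨-k, -((n:ℝ)^(-k)) * c, (n:ℝ)^k * (ε/2), by positivity, ?_⟩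
      intro y' hy'
      set z := ((n:ℝ)^(-k)) * (y' - c) with hz
      have hzx : |z - Fi y| < ε := by
        have heq : z - Fi y = ((n:ℝ)^(-k)) * (y' - y) := by
          rw [hz]
          linear_combination hy_eq
        rw [heq, abs_mul, abs_of_pos (hnpos (-k))]
        rw [zpow_neg]
        calc ((n:ℝ)^k)⁻¹ * |y' - y| < ((n:ℝ)^k)⁻¹ * ((n:ℝ)^k * (ε/2)) := by
              apply mul_lt_mul_of_pos_left hy' (by positivity)
          _ = ε/2 := by field_simp
          _ < ε := by linarith
      have hFz' : F z = y' := by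
        rw [hloc z hzx, hz]
        linear_combination (y' - c) * hkk2
      have hzz : Fi y' = z := by
        rw [← hFz', hli]
      rw [hzz, hz]
      ring
  · intro q hq
    by_cases hB : Fi q ∈ BF
    · exact hBFz hB
    · obtain ⟨k, c, ε, hε, hloc⟩ := hBFl (Fi q) hB
      have hc : c ∈ zpows n := const_zpows hn hFz hε hloc
      have hFx : q = (n:ℝ)^k * (Fi q) + c := by
        have := hloc (Fi q) (by simpa using hε)
        rw [hri] at this
        exact this
      have hkk1 : ((n:ℝ)^(-k)) * ((n:ℝ)^k) = 1 := by
        rw [← zpow_add₀ (nne hn)]; simp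
      have : Fi q = ((n:ℝ)^(-k)) * (q - c) := by
        have h := congrArg (fun t => ((n:ℝ)^(-k)) * t) hFx
        rw [mul_sub]
        rw [h, mul_add, ← mul_assoc, hkk1, one_mul]
        ring
      rw [this]
      exact zpows_mul hn (zpows_zpow _) (zpows_sub hn hq hc)

/-- subtracting an integer multiple of r preserves goodness -/
lemma good_shift {n : ℕ} (hn : 2 ≤ n) {F : ℝ → ℝ} (hF : Good n r F) (m : ℤ)
    (hrz : (r:ℝ) ∈ zpows n) :
    Good n r (fun x => F x - m * r) := by
  obtain ⟨hFe, hFm, hFs, ⟨BF, hBFfin, hBFper, hBFz, hBFl⟩, hFz⟩ := hF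
  refine ⟨fun x => by show F (x + r) - (m:ℝ)*r = F x - (m:ℝ)*r + r; rw [hFe]; ring, ?_, ?_, ?_, ?_⟩
  · intro x y hxy
    simpa using hFm hxy
  · intro y
    obtain ⟨x, hx⟩ := hFs (y + m * r)
    exact ⟨x, by show F x - (m:ℝ)*r = y; rw [hx]; ring⟩
  · refine ⟨BF, hBFfin, hBFper, hBFz, ?_⟩
    intro x hx
    obtain ⟨k, c, ε, hε, hloc⟩ := hBFl x hx
    exact ⟨k, c - m * r, ε, hε, fun y hy => by
      show F y - (m:ℝ)*r = _
      rw [hloc y hy]; ring⟩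
  · intro q hq
    exact zpows_sub hn (hFz q hq) (zpows_mul hn (zpows_intCast m) hrz)

end GoodLemmas

variable {n : ℕ}

/-- two-point rigidity of affine maps with positive slopes -/
lemma aff_eq (hn : 2 ≤ n) {k k' : ℤ} {c c' : ℝ} {z1 z2 : ℝ} (h12 : z1 ≠ z2)
    (h1 : (n:ℝ)^k * z1 + c = (n:ℝ)^k' * z1 + c')
    (h2 : (n:ℝ)^k * z2 + c = (n:ℝ)^k' * z2 + c') :
    ((n:ℝ)^k = (n:ℝ)^k' ∧ c = c') := by
  have hk : (n:ℝ)^k = (n:ℝ)^k' := by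
    have : ((n:ℝ)^k - (n:ℝ)^k') * (z1 - z2) = 0 := by linarith
    rcases mul_eq_zero.mp this with h | h
    · linarith
    · exact absurd (by linarith : z1 = z2) h12
  exact ⟨hk, by rw [hk] at h1; linarith⟩

/-- rightward propagation of a local affine formula on an interval -/
lemma loc_to_right {F : ℝ → ℝ} (hn : 2 ≤ n) {a b : ℝ}
    (hloc : ∀ x ∈ Set.Ioo a b, ∃ (k : ℤ) (c : ℝ), ∃ ε > 0,
      ∀ y : ℝ, |y - x| < ε → F y = (n : ℝ) ^ k * y + c)
    {x0 : ℝ} (hx0 : x0 ∈ Set.Ioo a b) {k : ℤ} {c : ℝ} {ε0 : ℝ} (hε0 : 0 < ε0)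
    (h0 : ∀ y : ℝ, |y - x0| < ε0 → F y = (n : ℝ) ^ k * y + c) :
    ∀ x ∈ Set.Ico x0 b, F x = (n : ℝ) ^ k * x + c := by
  set A : ℝ → ℝ := fun z => (n:ℝ)^k * z + c with hA
  set U : Set ℝ := {y | y ∈ Set.Ico x0 b ∧ ∀ z ∈ Set.Icc x0 y, F z = A z} with hU
  have hx0U : x0 ∈ U := by
    refine ⟨⟨le_refl _, hx0.2⟩, ?_⟩
    intro z hz
    have : z = x0 := le_antisymm hz.2 hz.1
    rw [this]
    exact h0 x0 (by simpa using hε0)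
  have hUne : U.Nonempty := ⟨x0, hx0U⟩
  have hUbdd : BddAbove U := ⟨b, fun y hy => le_of_lt hy.1.2⟩
  set m := sSup U with hm
  have hmb : m ≤ b := csSup_le hUne (fun y hy => le_of_lt hy.1.2)
  have hmx0 : x0 ≤ m := le_csSup hUbdd hx0U
  -- m is strictly bigger than x0
  have hy0 : min (x0 + ε0/2) ((x0+b)/2) ∈ U := by
    refine ⟨⟨le_min (by linarith) (by cases hx0 with | intro h1 h2 => linarith), ?_⟩, ?_⟩
    · apply min_lt_of_right_lt
      cases hx0 with | intro h1 h2 => linarith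
    · intro z hz
      apply h0
      rw [abs_lt]
      have := hz.1
      have h2 := hz.2
      have h3 : z ≤ x0 + ε0/2 := le_trans h2 (min_le_left _ _)
      constructor <;> linarith
  have hmgt : x0 < m := by
    have := le_csSup hUbdd hy0
    have h1 : x0 < min (x0 + ε0/2) ((x0+b)/2) := by
      apply lt_min (by linarith)
      cases hx0 with | intro h1 h2 => linarith
    linarith
  -- everything below m is fine
  have hbelow : ∀ z, x0 ≤ z → z < m → F z = A z := by
    intro z hz1 hz2
    obtain ⟨y, hyU, hzy⟩ := exists_lt_of_lt_csSup hUne hz2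
    exact hyU.2 z ⟨hz1, le_of_lt hzy⟩
  intro x hx
  rcases lt_or_ge x m with h | h
  · exact hbelow x hx.1 h
  -- show m = b, i.e. m < b is absurd
  exfalso
  have hmlt : m < b := lt_of_le_of_lt h hx.2
  have hmI : m ∈ Set.Ioo a b := ⟨lt_of_lt_of_le hx0.1 hmx0, hmlt⟩
  obtain ⟨k', c', ε', hε', hloc'⟩ := hloc m hmI
  -- two sample points just below m
  set z1 := m - min (ε'/2) ((m - x0)/2) with hz1
  set z2 := m - min (ε'/4) ((m - x0)/4) with hz2
  have hmin2 : 0 < min (ε'/2) ((m - x0)/2) := lt_min (by linarith) (by linarith)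
  have hmin4 : 0 < min (ε'/4) ((m - x0)/4) := lt_min (by linarith) (by linarith)
  have hz1x0 : x0 ≤ z1 := by
    have := min_le_right (ε'/2) ((m - x0)/2)
    rw [hz1]; linarith
  have hz2x0 : x0 ≤ z2 := by
    have := min_le_right (ε'/4) ((m - x0)/4)
    rw [hz2]; linarith
  have hz1m : z1 < m := by rw [hz1]; linarith
  have hz2m : z2 < m := by rw [hz2]; linarith
  have hz12 : z1 ≠ z2 := by
    have h1 : min (ε'/4) ((m - x0)/4) < min (ε'/2) ((m - x0)/2) := by
      rcases min_cases (ε'/2) ((m - x0)/2) with ⟨he, _⟩ | ⟨he, _⟩ <;>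
        rcases min_cases (ε'/4) ((m - x0)/4) with ⟨hf, _⟩ | ⟨hf, _⟩ <;> rw [he, hf] <;> linarith
    rw [hz1, hz2]
    intro hcon
    have : min (ε'/2) ((m - x0)/2) = min (ε'/4) ((m - x0)/4) := by linarith
    linarith
  have hFz1 : F z1 = A z1 := hbelow z1 hz1x0 hz1m
  have hFz2 : F z2 = A z2 := hbelow z2 hz2x0 hz2m
  have hF'z1 : F z1 = (n:ℝ)^k' * z1 + c' := by
    apply hloc'
    rw [hz1, abs_lt]
    have := min_le_left (ε'/2) ((m - x0)/2)
    constructor <;> linarith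
  have hF'z2 : F z2 = (n:ℝ)^k' * z2 + c' := by
    apply hloc'
    rw [hz2, abs_lt]
    have := min_le_left (ε'/4) ((m - x0)/4)
    constructor <;> linarith
  have he1 : (n:ℝ)^k * z1 + c = (n:ℝ)^k' * z1 + c' := by
    rw [← hF'z1, hFz1]
  have he2 : (n:ℝ)^k * z2 + c = (n:ℝ)^k' * z2 + c' := by
    rw [← hF'z2, hFz2]
  obtain ⟨hkk, hcc⟩ := aff_eq hn hz12 he1 he2
  -- now extend past m
  set y' := min (m + ε'/2) ((m + b)/2) with hy'
  have hy'U : y' ∈ U := by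
    refine ⟨⟨le_trans hmx0 (le_min (by linarith) (by linarith)), ?_⟩, ?_⟩
    · apply min_lt_of_right_lt; linarith
    · intro z hz
      rcases lt_or_ge z m with h1 | h1
      · exact hbelow z hz.1 h1
      · have : F z = (n:ℝ)^k' * z + c' := by
          apply hloc'
          rw [abs_lt]
          have h3 : z ≤ m + ε'/2 := le_trans hz.2 (min_le_left _ _)
          constructor <;> linarith
        rw [this, hA]
        simp only []
        rw [hkk, hcc]
  have : y' ≤ m := le_csSup hUbdd hy'U
  have : m < y' := lt_min (by linarith) (by linarith)
  linarith

/-- a locally affine map on an open interval is affine, up to the closed ends (via continuity) -/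
lemma affine_on_Icc {r : ℝ} {F : ℝ → ℝ} (hn : 2 ≤ n) (hF : Good n r F) {a b : ℝ} (hab : a < b)
    (hloc : ∀ x ∈ Set.Ioo a b, ∃ (k : ℤ) (c : ℝ), ∃ ε > 0,
      ∀ y : ℝ, |y - x| < ε → F y = (n : ℝ) ^ k * y + c) :
    ∃ (k : ℤ) (c : ℝ), ∀ x ∈ Set.Icc a b, F x = (n : ℝ) ^ k * x + c := by
  have hx0 : (a+b)/2 ∈ Set.Ioo a b := ⟨by linarith, by linarith⟩
  obtain ⟨k, c, ε0, hε0, h0⟩ := hloc _ hx0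
  refine ⟨k, c, ?_⟩
  have hright : ∀ x ∈ Set.Ico ((a+b)/2) b, F x = (n:ℝ)^k * x + c :=
    loc_to_right hn hloc hx0 hε0 h0
  -- leftward: apply loc_to_right to G = -F(-·)
  have hleft : ∀ x ∈ Set.Ioo a ((a+b)/2), F x = (n:ℝ)^k * x + c := by
    set G : ℝ → ℝ := fun y => -F (-y) with hG
    have hlocG : ∀ x ∈ Set.Ioo (-b) (-a), ∃ (k' : ℤ) (c' : ℝ), ∃ ε > 0,
        ∀ y : ℝ, |y - x| < ε → G y = (n : ℝ) ^ k' * y + c' := by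
      intro x hx
      obtain ⟨k', c', ε, hε, hl⟩ := hloc (-x) ⟨by linarith [hx.2], by linarith [hx.1]⟩
      refine ⟨k', -c', ε, hε, ?_⟩
      intro y hy
      have : |-y - -x| < ε := by rw [abs_sub_comm, show -x - -y = y - x by ring]; exact hy
      rw [hG]
      simp only []
      rw [hl (-y) this]
      ring
    have hx0' : -((a+b)/2) ∈ Set.Ioo (-b) (-a) := ⟨by linarith, by linarith⟩
    have h0' : ∀ y : ℝ, |y - -((a+b)/2)| < ε0 → G y = (n:ℝ)^k * y + (-c) := by
      intro y hy
      have : |-y - (a+b)/2| < ε0 := by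
        rw [abs_sub_comm, show (a+b)/2 - -y = y - -((a+b)/2) by ring]; exact hy
      rw [hG]; simp only []
      rw [h0 (-y) this]; ring
    have := loc_to_right hn hlocG hx0' hε0 h0'
    intro x hx
    have hxm : -x ∈ Set.Ico (-((a+b)/2)) (-a) := ⟨by linarith [hx.2], by linarith [hx.1]⟩
    have := this (-x) hxm
    rw [hG] at this
    simp only [neg_neg] at this
    have : F x = -((n:ℝ)^k * (-x) + (-c)) := by linarith
    rw [this]; ring
  have hIoo : ∀ x ∈ Set.Ioo a b, F x = (n:ℝ)^k * x + c := by
    intro x hx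
    rcases lt_or_ge x ((a+b)/2) with h | h
    · exact hleft x ⟨hx.1, h⟩
    · exact hright x ⟨h, hx.2⟩
  -- endpoints by continuity
  have hcont := good_cont hF
  have hend : ∀ e : ℝ, e ∈ Set.Icc a b → F e = (n:ℝ)^k * e + c := by
    intro e he
    rcases eq_or_lt_of_le he.1 with rfl | hae
    · -- e = a : approach from the right
      have h1 : Filter.Tendsto F (nhdsWithin a (Set.Ioi a)) (nhds (F a)) :=
        (hcont.tendsto a).mono_left nhdsWithin_le_nhds
      have h2 : Filter.Tendsto (fun x => (n:ℝ)^k * x + c) (nhdsWithin a (Set.Ioi a))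
          (nhds ((n:ℝ)^k * a + c)) := by
        apply Filter.Tendsto.mono_left _ nhdsWithin_le_nhds
        exact (continuous_const.mul continuous_id').add continuous_const |>.tendsto a
      have heq : F =ᶠ[nhdsWithin a (Set.Ioi a)] (fun x => (n:ℝ)^k * x + c) := by
        filter_upwards [Ioo_mem_nhdsGT_of_mem (Set.mem_Ico.mpr ⟨le_refl a, hab⟩)] with x hx
        exact hIoo x hx
      exact tendsto_nhds_unique (h1.congr' heq) h2
    rcases eq_or_lt_of_le he.2 with rfl | hbe
    · have h1 : Filter.Tendsto F (nhdsWithin e (Set.Iio e)) (nhds (F e)) :=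
        (hcont.tendsto e).mono_left nhdsWithin_le_nhds
      have h2 : Filter.Tendsto (fun x => (n:ℝ)^k * x + c) (nhdsWithin e (Set.Iio e))
          (nhds ((n:ℝ)^k * e + c)) := by
        apply Filter.Tendsto.mono_left _ nhdsWithin_le_nhds
        exact (continuous_const.mul continuous_id').add continuous_const |>.tendsto e
      have heq : F =ᶠ[nhdsWithin e (Set.Iio e)] (fun x => (n:ℝ)^k * x + c) := by
        filter_upwards [Ioo_mem_nhdsLT_of_mem (Set.mem_Ioc.mpr ⟨hae, le_refl e⟩)] with x hx
        exact hIoo x hx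
      exact tendsto_nhds_unique (h1.congr' heq) h2
    · exact hIoo e ⟨hae, hbe⟩
  exact hend

/-- key lemma: the φ-shift of a good map is the same at every point of ℤ[1/n] -/
lemma phi_shift {r : ℝ} {φ : ℝ → ZMod (n-1)} (hn : 2 ≤ n) (hφ : IsPhi n φ) (hr : 0 < r)
    {F : ℝ → ℝ} (hF : Good n r F) :
    ∀ q ∈ zpows n, φ (F q) = φ q + φ (F 0) := by
  obtain ⟨B, hBfin, hBper, hBz, hBl⟩ := hF.2.2.2.1
  -- pairwise invariance
  have key : ∀ (N : ℕ) (s : Finset ℝ) (a b : ℝ), a ∈ zpows n → b ∈ zpows n → a < b →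
      (B ∩ Set.Ioo a b) ⊆ ↑s → s.card ≤ N →
      φ (F b) - φ b = φ (F a) - φ a := by
    intro N
    induction N with
    | zero =>
        intro s a b ha hb hab hsub hcard
        have hs : s = ∅ := Finset.card_eq_zero.mp (le_antisymm hcard (Nat.zero_le _))
        rw [hs] at hsub
        have hempty : ∀ x ∈ Set.Ioo a b, x ∉ B := by
          intro x hx hxB
          simpa using hsub ⟨hxB, hx⟩
        obtain ⟨k, c, haff⟩ := affine_on_Icc hn hF hab (fun x hx => hBl x (hempty x hx))
        obtain ⟨q, hq, hq1, hq2⟩ := zpows_dense hn hab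
        have hc : c ∈ zpows n := by
          have := haff q ⟨le_of_lt hq1, le_of_lt hq2⟩
          have hc' : c = F q - (n:ℝ)^k * q := by linarith
          rw [hc']
          exact zpows_sub hn (hF.2.2.2.2 q hq) (zpows_mul hn (zpows_zpow k) hq)
        have hfa := haff a ⟨le_refl _, le_of_lt hab⟩
        have hfb := haff b ⟨le_of_lt hab, le_refl _⟩
        rw [hfa, hfb, phi_affine hn hφ ha hc k, phi_affine hn hφ hb hc k]
        ring
    | succ N ih =>
        intro s a b ha hb hab hsub hcard
        by_cases hne : (B ∩ Set.Ioo a b).Nonempty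
        · obtain ⟨m, hmB, hmI⟩ := hne
          have hms : m ∈ s := hsub ⟨hmB, hmI⟩
          have hmz : m ∈ zpows n := hBz hmB
          have h1 : φ (F m) - φ m = φ (F a) - φ a := by
            apply ih (s.erase m) a m ha hmz hmI.1
            · rintro x ⟨hxB, hxI⟩
              refine Finset.mem_coe.mpr (Finset.mem_erase.mpr ⟨ne_of_lt hxI.2, hsub ⟨hxB, hxI.1, lt_trans hxI.2 hmI.2⟩⟩)
            · rw [Finset.card_erase_of_mem hms]
              omega
          have h2 : φ (F b) - φ b = φ (F m) - φ m := by
            apply ih (s.erase m) m b hmz hb hmI.2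
            · rintro x ⟨hxB, hxI⟩
              refine Finset.mem_coe.mpr (Finset.mem_erase.mpr ⟨(ne_of_lt hxI.1).symm, hsub ⟨hxB, lt_trans hmI.1 hxI.1, hxI.2⟩⟩)
            · rw [Finset.card_erase_of_mem hms]
              omega
          rw [h2, h1]
        · rw [Set.not_nonempty_iff_eq_empty] at hne
          apply ih ∅ a b ha hb hab (by rw [hne]; simp) (by simp)
  have main : ∀ a b : ℝ, a ∈ zpows n → b ∈ zpows n → a < b →
      φ (F b) - φ b = φ (F a) - φ a := by
    intro a b ha hb hab
    have hfin : (B ∩ Set.Icc a b).Finite := by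
      -- reuse periodic finiteness
      exact St8.perfin hr hBfin hBper a b
    have hfin2 : (B ∩ Set.Ioo a b).Finite :=
      Set.Finite.subset hfin (Set.inter_subset_inter_right _ Set.Ioo_subset_Icc_self)
    exact key hfin2.toFinset.card hfin2.toFinset a b ha hb hab
      (by rw [Set.Finite.coe_toFinset]) (le_refl _)
  intro q hq
  rcases lt_trichotomy q 0 with h | h | h
  · have := main q 0 hq zpows_zero h
    rw [phi_zero hn hφ] at this
    linear_combination -this
  · rw [h]; rw [phi_zero hn hφ]; ring
  · have := main 0 q zpows_zero hq h
    rw [phi_zero hn hφ] at this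
    linear_combination this


section Circle

variable {r : ℝ}

lemma coe_eq_iff {a b : ℝ} : ((a : AddCircle r) = (b : AddCircle r)) ↔ ∃ m : ℤ, b = a + m * r := by
  rw [QuotientAddGroup.eq_iff_sub_mem]
  constructor
  · rintro h
    obtain ⟨m, hm⟩ := AddSubgroup.mem_zmultiples_iff.mp h
    rw [zsmul_eq_mul] at hm
    exact ⟨-m, by push_cast; linarith⟩
  · rintro ⟨m, rfl⟩
    refine AddSubgroup.mem_zmultiples_iff.mpr ⟨-m, ?_⟩
    rw [zsmul_eq_mul]; push_cast; ring

/-- descend a good lift to the circle -/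
def cf (r : ℝ) (F : ℝ → ℝ) : AddCircle r → AddCircle r :=
  fun z => ((F (Quotient.out z) : ℝ) : AddCircle r)

lemma cf_coe {n : ℕ} {F : ℝ → ℝ} (hFe : ∀ x : ℝ, F (x + r) = F x + r) (x : ℝ) :
    cf r F ((x : ℝ) : AddCircle r) = ((F x : ℝ) : AddCircle r) := by
  set t := Quotient.out ((x : ℝ) : AddCircle r) with ht
  have hout : ((t : ℝ) : AddCircle r) = ((x : ℝ) : AddCircle r) := Quotient.out_eq' _
  obtain ⟨m, hm⟩ := coe_eq_iff.mp hout
  show ((F t : ℝ) : AddCircle r) = ((F x : ℝ) : AddCircle r)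
  symm
  rw [coe_eq_iff]
  exact ⟨-m, by rw [hm, equi_zsmul hFe m t]; push_cast; ring⟩

/-- the circle permutation induced by a good lift -/
def permOf {n : ℕ} (hn : 2 ≤ n) (hr : 0 < r) {F : ℝ → ℝ} (hF : Good n r F) :
    Equiv.Perm (AddCircle r) where
  toFun := cf r F
  invFun := cf r (Function.invFun F)
  left_inv := by
    intro z
    induction z using QuotientAddGroup.induction_on with
    | H x =>
      obtain ⟨hGi, hli, hri⟩ := good_inv hr hn hF
      rw [show ((QuotientAddGroup.mk x : AddCircle r)) = ((x : ℝ) : AddCircle r) from rfl,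
        cf_coe (n := n) hF.1 x, cf_coe (n := n) hGi.1 (F x), hli x]
  right_inv := by
    intro z
    induction z using QuotientAddGroup.induction_on with
    | H x =>
      obtain ⟨hGi, hli, hri⟩ := good_inv hr hn hF
      rw [show ((QuotientAddGroup.mk x : AddCircle r)) = ((x : ℝ) : AddCircle r) from rfl,
        cf_coe (n := n) hGi.1 x, cf_coe (n := n) hF.1 _, hri x]

lemma permOf_coe {n : ℕ} (hn : 2 ≤ n) (hr : 0 < r) {F : ℝ → ℝ} (hF : Good n r F) (x : ℝ) :
    permOf hn hr hF ((x : ℝ) : AddCircle r) = ((F x : ℝ) : AddCircle r) :=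
  cf_coe (n := n) hF.1 x

/-- `MemT` as `Good` + lift property -/
lemma memT_iff {n : ℕ} {f : AddCircle r → AddCircle r} :
    MemT n r f ↔ ∃ F : ℝ → ℝ, (∀ x : ℝ, f (x : AddCircle r) = ((F x : ℝ) : AddCircle r)) ∧
      Good n r F := by
  constructor
  · rintro ⟨F, h1, h2, h3, h4, h5, h6⟩
    exact ⟨F, h1, h2, h3, h4, h5, h6⟩
  · rintro ⟨F, h1, h2, h3, h4, h5, h6⟩
    exact ⟨F, h1, h2, h3, h4, h5, h6⟩

/-- the inverse of a permutation with a good lift has the inverse lift -/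
lemma lift_inv {n : ℕ} (hn : 2 ≤ n) (hr : 0 < r) {f : Equiv.Perm (AddCircle r)} {F : ℝ → ℝ}
    (hF : Good n r F) (hlift : ∀ x : ℝ, f ((x : ℝ) : AddCircle r) = ((F x : ℝ) : AddCircle r)) :
    ∀ x : ℝ, f⁻¹ ((x : ℝ) : AddCircle r) = ((Function.invFun F x : ℝ) : AddCircle r) := by
  intro x
  obtain ⟨hGi, hli, hri⟩ := good_inv hr hn hF
  apply f.injective
  rw [show f (f⁻¹ ((x : ℝ) : AddCircle r)) = ((x : ℝ) : AddCircle r) from f.apply_symm_apply _, hlift, hri]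

lemma lift_mul {r : ℝ} {f g : Equiv.Perm (AddCircle r)} {F G : ℝ → ℝ}
    (hliftf : ∀ x : ℝ, f ((x : ℝ) : AddCircle r) = ((F x : ℝ) : AddCircle r))
    (hliftg : ∀ x : ℝ, g ((x : ℝ) : AddCircle r) = ((G x : ℝ) : AddCircle r)) :
    ∀ x : ℝ, (f * g) ((x : ℝ) : AddCircle r) = ((F (G x) : ℝ) : AddCircle r) := by
  intro x
  rw [Equiv.Perm.mul_apply, hliftg, hliftf]

end Circle

section Delta

variable {r : ℝ} {φ : ℝ → ZMod (n-1)}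

/-- a permutation with a good lift of zero φ-shift preserves the image of Δ -/
lemma image_delta (hn : 2 ≤ n) (hφ : IsPhi n φ) (hr : 0 < r)
    {f : Equiv.Perm (AddCircle r)} {F : ℝ → ℝ} (hF : Good n r F)
    (hlift : ∀ x : ℝ, f ((x : ℝ) : AddCircle r) = ((F x : ℝ) : AddCircle r))
    (hν : φ (F 0) = 0) :
    ⇑f '' DeltaCircle n r φ = DeltaCircle n r φ := by
  apply Set.eq_of_subset_of_subset
  · rintro z ⟨w, ⟨q, hq, hq0, rfl⟩, rfl⟩
    refine ⟨F q, hF.2.2.2.2 q hq, ?_, (hlift q)⟩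
    rw [phi_shift hn hφ hr hF q hq, hq0, hν, add_zero]
  · rintro z ⟨q, hq, hq0, rfl⟩
    obtain ⟨hGi, hli, hri⟩ := good_inv hr hn hF
    refine ⟨((Function.invFun F q : ℝ) : AddCircle r), ⟨Function.invFun F q,
      hGi.2.2.2.2 q hq, ?_, rfl⟩, ?_⟩
    · have h1 : φ (F (Function.invFun F q)) = φ (Function.invFun F q) + φ (F 0) :=
        phi_shift hn hφ hr hF _ (hGi.2.2.2.2 q hq)
      rw [hri q, hν, add_zero] at h1
      rw [← h1, hq0]
    · rw [hlift, hri q]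

/-- membership of `f ⟦0⟧` in Δ, extracted from the image condition -/
lemma exists_qstar (hn : 2 ≤ n) (hφ : IsPhi n φ)
    {f : Equiv.Perm (AddCircle r)} {F : ℝ → ℝ}
    (hlift : ∀ x : ℝ, f ((x : ℝ) : AddCircle r) = ((F x : ℝ) : AddCircle r))
    (himg : ⇑f '' DeltaCircle n r φ = DeltaCircle n r φ) :
    ∃ q : ℝ, q ∈ zpows n ∧ φ q = 0 ∧ ((F 0 : ℝ) : AddCircle r) = ((q : ℝ) : AddCircle r) := by
  have h0 : ((0 : ℝ) : AddCircle r) ∈ DeltaCircle n r φ :=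
    ⟨0, zpows_zero, phi_zero hn hφ, rfl⟩
  have : f ((0 : ℝ) : AddCircle r) ∈ DeltaCircle n r φ := by
    rw [← himg]; exact ⟨_, h0, rfl⟩
  rw [hlift 0] at this
  obtain ⟨q, hq, hq0, heq⟩ := this
  exact ⟨q, hq, hq0, heq⟩

/-- the right-hand side as a subgroup -/
def RHSgrp (n : ℕ) (r : ℝ) (φ : ℝ → ZMod (n-1)) (hn : 2 ≤ n) (hφ : IsPhi n φ) (hr : 0 < r) :
    Subgroup (Equiv.Perm (AddCircle r)) where
  carrier := {f | MemT n r ⇑f ∧ ⇑f '' DeltaCircle n r φ = DeltaCircle n r φ}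
  one_mem' := by
    constructor
    · refine memT_iff.mpr ⟨id, fun x => rfl, good_id hn⟩
    · simp [Set.image_id]
  mul_mem' := by
    rintro a b ⟨hma, hia⟩ ⟨hmb, hib⟩
    obtain ⟨Fa, hla, hga⟩ := memT_iff.mp hma
    obtain ⟨Fb, hlb, hgb⟩ := memT_iff.mp hmb
    constructor
    · exact memT_iff.mpr ⟨Fa ∘ Fb, fun x => lift_mul hla hlb x, good_comp hr hn hga hgb⟩
    · have : ⇑(a * b) = ⇑a ∘ ⇑b := rfl
      rw [this, Set.image_comp, hib, hia]
  inv_mem' := by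
    rintro a ⟨hma, hia⟩
    obtain ⟨Fa, hla, hga⟩ := memT_iff.mp hma
    constructor
    · exact memT_iff.mpr ⟨Function.invFun Fa, lift_inv hn hr hga hla, (good_inv hr hn hga).1⟩
    · have hcomp : ⇑a⁻¹ ∘ ⇑a = id := by funext z; simp
      conv_lhs => rw [← hia]
      rw [← Set.image_comp, hcomp, Set.image_id]

lemma btgen_subset_rhs (hn : 2 ≤ n) (hφ : IsPhi n φ) (hr : 0 < r) (hrz : r ∈ zpows n) :
    BTgen n r ⊆ ↑(RHSgrp n r φ hn hφ hr) := by
  rintro f ⟨hmem, u, v, huv, harc⟩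
  refine ⟨hmem, ?_⟩
  obtain ⟨F, hlift, hgood⟩ := memT_iff.mp hmem
  obtain ⟨w0, hw0z, hw0u, hw0v⟩ := zpows_dense hn huv
  have harc0 := harc w0 ⟨hw0u, hw0v⟩
  rw [hlift w0] at harc0
  obtain ⟨m, hm⟩ := coe_eq_iff.mp harc0
  set F' : ℝ → ℝ := fun x => F x - (-m : ℤ) * r with hF'
  have hgood' : Good n r F' := good_shift hn hgood (-m) hrz
  have hlift' : ∀ x : ℝ, f ((x : ℝ) : AddCircle r) = ((F' x : ℝ) : AddCircle r) := by
    intro x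
    rw [hlift x, coe_eq_iff]
    exact ⟨m, by show F' x = F x + (m:ℝ) * r; rw [hF']; push_cast; ring⟩
  have hν : φ (F' 0) = 0 := by
    have h1 : φ (F' w0) = φ w0 + φ (F' 0) := phi_shift hn hφ hr hgood' w0 hw0z
    have h2 : F' w0 = w0 := by
      show F w0 - (-m : ℤ) * r = w0
      push_cast
      linarith
    rw [h2] at h1
    linear_combination -h1
  exact image_delta hn hφ hr hgood' hlift' hν

lemma closure_le_rhs (hn : 2 ≤ n) (hφ : IsPhi n φ) (hr : 0 < r) (hrz : r ∈ zpows n) :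
    ∀ f ∈ BTgrp n r, MemT n r ⇑f ∧ ⇑f '' DeltaCircle n r φ = DeltaCircle n r φ := by
  intro f hf
  have := (Subgroup.closure_le (RHSgrp n r φ hn hφ hr)).mpr (btgen_subset_rhs hn hφ hr hrz) hf
  exact this

end Delta

section Interp

variable {r : ℝ} {φ : ℝ → ZMod (n-1)}

lemma exists_s (hn : 2 ≤ n) {L L' : ℝ} (hL : 0 < L) (hL' : 0 < L') :
    ∃ s : ℤ, (n:ℝ)^s * L ≤ L' ∧ L' < (n:ℝ)^(s+1) * L := by
  set t := L' / L with ht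
  have htpos : 0 < t := div_pos hL' hL
  have hn1 : (1:ℝ) < (n:ℝ) := none' hn
  have hn0 : (0:ℝ) < (n:ℝ) := npos hn
  refine ⟨⌊Real.logb n t⌋, ?_, ?_⟩
  · have h1 : (n:ℝ) ^ ((⌊Real.logb n t⌋ : ℤ) : ℝ) ≤ (n:ℝ) ^ (Real.logb n t) :=
      Real.rpow_le_rpow_of_exponent_le (le_of_lt hn1) (Int.floor_le _)
    rw [Real.rpow_logb hn0 (ne_of_gt hn1) htpos, Real.rpow_intCast] at h1
    calc (n:ℝ)^(⌊Real.logb n t⌋) * L ≤ t * L := by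
          exact mul_le_mul_of_nonneg_right h1 (le_of_lt hL)
      _ = L' := by rw [ht]; field_simp
  · have h1 : (n:ℝ) ^ (Real.logb n t) < (n:ℝ) ^ (((⌊Real.logb n t⌋ + 1 : ℤ) : ℝ)) := by
      apply Real.rpow_lt_rpow_of_exponent_lt hn1
      push_cast
      exact Int.lt_floor_add_one _
    rw [Real.rpow_logb hn0 (ne_of_gt hn1) htpos, Real.rpow_intCast] at h1
    calc L' = t * L := by rw [ht]; field_simp
      _ < (n:ℝ)^(⌊Real.logb n t⌋ + 1) * L := by
          exact mul_lt_mul_of_pos_right h1 hL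

/-- the 2-piece interpolation between zpows intervals of φ-equal lengths -/
lemma interp (hn : 2 ≤ n) (hφ : IsPhi n φ) {a b a' b' : ℝ}
    (ha : a ∈ zpows n) (hb : b ∈ zpows n) (ha' : a' ∈ zpows n) (hb' : b' ∈ zpows n)
    (hab : a < b) (hab' : a' < b') (hphi : φ (b - a) = φ (b' - a')) :
    ∃ It : ℝ → ℝ, ∃ w : ℝ,
      w ∈ zpows n ∧ a ≤ w ∧ w < b ∧
      It a = a' ∧ It b = b' ∧
      StrictMonoOn It (Set.Icc a b) ∧
      Continuous It ∧
      (∀ q ∈ zpows n, It q ∈ zpows n) ∧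
      (∀ x : ℝ, x ≠ w → ∃ (k : ℤ) (c : ℝ), ∃ ε > 0,
        ∀ y, |y - x| < ε → It y = (n:ℝ)^k * y + c) := by
  have hn1 : (1:ℝ) < (n:ℝ) := none' hn
  set L := b - a with hL
  set L' := b' - a' with hL'
  have hLpos : 0 < L := by rw [hL]; linarith
  have hL'pos : 0 < L' := by rw [hL']; linarith
  obtain ⟨s, hs1, hs2⟩ := exists_s hn hLpos hL'pos
  -- Z
  have hphiD : φ (L' - (n:ℝ)^s * L) = 0 := by
    have h1 : φ ((n:ℝ)^s * L) = φ L := by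
      rw [show (n:ℝ)^s * L = (n:ℝ)^s * L + 0 by ring,
        phi_affine hn hφ (zpows_sub hn hb ha) zpows_zero s, phi_zero hn hφ, add_zero]
    rw [phi_sub hn hφ (zpows_sub hn hb' ha') (zpows_mul hn (zpows_zpow s) (zpows_sub hn hb ha)),
      h1, ← hphi, hL]
    ring
  obtain ⟨y0, hy0, hy0eq⟩ := phi_div hn hφ
    (zpows_sub hn (zpows_sub hn hb' ha') (zpows_mul hn (zpows_zpow s) (zpows_sub hn hb ha))) hphiD
  set Z := y0 * (n:ℝ)^(-s) with hZ
  have hZzp : Z ∈ zpows n := zpows_mul hn hy0 (zpows_zpow _)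
  have hnspos : (0:ℝ) < (n:ℝ)^s := zpow_pos (by positivity) _
  have hZdef : ((n:ℝ) - 1) * ((n:ℝ)^s * Z) = L' - (n:ℝ)^s * L := by
    have hss : (n:ℝ)^s * (y0 * (n:ℝ)^(-s)) = y0 := by
      rw [show (n:ℝ)^s * (y0 * (n:ℝ)^(-s)) = ((n:ℝ)^s * (n:ℝ)^(-s)) * y0 by ring,
        ← zpow_add₀ (nne hn)]
      simp
    rw [hZ, hss, ← hy0eq, hL', hL]
  have hZ0 : 0 ≤ Z := by
    have h1 : 0 ≤ ((n:ℝ) - 1) * ((n:ℝ)^s * Z) := by rw [hZdef]; linarith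
    by_contra hcon
    push_neg at hcon
    have : ((n:ℝ) - 1) * ((n:ℝ)^s * Z) < 0 := by
      apply mul_neg_of_pos_of_neg (by linarith)
      exact mul_neg_of_pos_of_neg hnspos hcon
    linarith
  have hZL : Z < L := by
    by_contra hcon
    push_neg at hcon
    have h1 : ((n:ℝ) - 1) * ((n:ℝ)^s * L) ≤ ((n:ℝ) - 1) * ((n:ℝ)^s * Z) := by
      apply mul_le_mul_of_nonneg_left _ (by linarith)
      exact mul_le_mul_of_nonneg_left hcon (le_of_lt hnspos)
    rw [hZdef] at h1
    have : L' < (n:ℝ)^(s+1) * L := hs2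
    rw [zpow_add₀ (nne hn), zpow_one] at this
    nlinarith
  set w := a + Z with hw
  set It : ℝ → ℝ := fun x => if x ≤ w then a' + (n:ℝ)^(s+1) * (x - a) else b' + (n:ℝ)^s * (x - b)
    with hIt
  have hmatch : a' + (n:ℝ)^(s+1) * (w - a) = b' + (n:ℝ)^s * (w - b) := by
    rw [hw]
    have h1 : (n:ℝ)^(s+1) = (n:ℝ)^s * n := by rw [zpow_add₀ (nne hn), zpow_one]
    rw [h1]
    have h2 : L' - (n:ℝ)^s * L = ((n:ℝ) - 1) * ((n:ℝ)^s * Z) := hZdef.symm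
    rw [hL', hL] at h2
    nlinarith [h2]
  have hwb : w < b := by rw [hw]; rw [hL] at hZL; linarith
  have haw : a ≤ w := by rw [hw]; linarith
  have hn1pos : (0:ℝ) < (n:ℝ)^(s+1) := zpow_pos (by positivity) _
  refine ⟨It, w, zpows_add hn ha hZzp, haw, hwb, ?_, ?_, ?_, ?_, ?_, ?_⟩
  · rw [hIt]; simp only [if_pos haw]; ring
  · rw [hIt]; simp only [if_neg (not_le.mpr hwb)]; ring
  · -- strict mono
    intro x hx y hy hxy
    rw [hIt]
    simp only []
    rcases le_or_gt x w with h1 | h1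
    · rcases le_or_gt y w with h2 | h2
      · rw [if_pos h1, if_pos h2]
        have := mul_lt_mul_of_pos_left (show x - a < y - a by linarith) hn1pos
        linarith
      · rw [if_pos h1, if_neg (not_le.mpr h2)]
        have e1 : a' + (n:ℝ)^(s+1) * (x - a) ≤ a' + (n:ℝ)^(s+1) * (w - a) := by
          have := mul_le_mul_of_nonneg_left (show x - a ≤ w - a by linarith) (le_of_lt hn1pos)
          linarith
        have e2 : b' + (n:ℝ)^s * (w - b) < b' + (n:ℝ)^s * (y - b) := by
          have := mul_lt_mul_of_pos_left (show w - b < y - b by linarith) hnspos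
          linarith
        linarith [hmatch]
    · rw [if_neg (not_le.mpr (lt_trans h1 hxy)), if_neg (not_le.mpr h1)]
      have := mul_lt_mul_of_pos_left (show x - b < y - b by linarith) hnspos
      linarith
  · -- continuity
    rw [hIt]
    apply Continuous.if_le
    · exact continuous_const.add (continuous_const.mul (continuous_id.sub continuous_const))
    · exact continuous_const.add (continuous_const.mul (continuous_id.sub continuous_const))
    · exact continuous_id
    · exact continuous_const
    · intro x hx
      rw [hx]
      exact hmatch
  · -- zpows preservation
    intro q hq
    rw [hIt]
    simp only []
    rcases le_or_gt q w with h | h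
    · rw [if_pos h]
      exact zpows_add hn ha' (zpows_mul hn (zpows_zpow _) (zpows_sub hn hq ha))
    · rw [if_neg (not_le.mpr h)]
      exact zpows_add hn hb' (zpows_mul hn (zpows_zpow _) (zpows_sub hn hq hb))
  · -- local affinity off w
    intro x hxw
    rcases lt_or_gt_of_ne hxw with h | h
    · refine ⟨s+1, a' - (n:ℝ)^(s+1) * a, w - x, by linarith, ?_⟩
      intro y hy
      rw [abs_lt] at hy
      have : y ≤ w := by linarith
      rw [hIt]
      simp only [if_pos this]
      ring
    · refine ⟨s, b' - (n:ℝ)^s * b, x - w, by linarith, ?_⟩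
      intro y hy
      rw [abs_lt] at hy
      have : ¬ (y ≤ w) := by push_neg; linarith
      rw [hIt]
      simp only [if_neg this]
      ring

end Interp

section Periodize

variable {r : ℝ}

lemma periodize (hn : 2 ≤ n) (hr : 0 < r) (hrz : r ∈ zpows n) {u : ℝ} (hu : u ∈ zpows n)
    {G0 : ℝ → ℝ}
    (hmono : StrictMonoOn G0 (Set.Icc u (u+r)))
    (hcont : ContinuousOn G0 (Set.Icc u (u+r)))
    (hper : G0 (u+r) = G0 u + r)
    (hz : ∀ q ∈ zpows n, q ∈ Set.Ico u (u+r) → G0 q ∈ zpows n)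
    {Bs : Set ℝ} (hBfin : Bs.Finite) (hBz : Bs ⊆ zpows n)
    (hloc : ∀ x ∈ Set.Ioo u (u+r), x ∉ Bs → ∃ (k : ℤ) (c : ℝ), ∃ ε > 0,
      ∀ y, |y - x| < ε → y ∈ Set.Ioo u (u+r) → G0 y = (n:ℝ)^k * y + c) :
    ∃ G : ℝ → ℝ, Good n r G ∧ ∀ x ∈ Set.Ico u (u+r), G x = G0 x := by
  set j : ℝ → ℤ := fun x => ⌊(x - u)/r⌋ with hj
  set p : ℝ → ℝ := fun x => x - j x * r with hp
  have hpmem : ∀ x, p x ∈ Set.Ico u (u+r) := by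
    intro x
    have h1 : ((j x : ℤ) : ℝ) ≤ (x - u)/r := Int.floor_le _
    have h2 : (x - u)/r < (j x : ℤ) + 1 := Int.lt_floor_add_one _
    rw [le_div_iff₀ hr] at h1
    rw [div_lt_iff₀ hr] at h2
    constructor
    · show u ≤ x - (j x) * r
      linarith
    · show x - (j x) * r < u + r
      push_cast at h2
      linarith
  have hjshift : ∀ (x : ℝ) (m : ℤ), j (x + m * r) = j x + m := by
    intro x m
    show ⌊(x + m * r - u)/r⌋ = ⌊(x - u)/r⌋ + m
    rw [show (x + m * r - u)/r = (x - u)/r + m by field_simp; ring]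
    exact Int.floor_add_intCast _ _
  have hpshift : ∀ (x : ℝ) (m : ℤ), p (x + m * r) = p x := by
    intro x m
    show x + m * r - (j (x + m*r)) * r = x - (j x) * r
    rw [hjshift x m]
    push_cast
    ring
  have hjmem : ∀ x ∈ Set.Ico u (u+r), j x = 0 := by
    intro x hx
    show ⌊(x - u)/r⌋ = 0
    rw [Int.floor_eq_zero_iff]
    constructor
    · apply div_nonneg (by linarith [hx.1]) (le_of_lt hr)
    · rw [div_lt_one hr]; linarith [hx.2]
  set G : ℝ → ℝ := fun x => G0 (p x) + j x * r with hG
  have hGmem : ∀ x ∈ Set.Ico u (u+r), G x = G0 x := by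
    intro x hx
    show G0 (p x) + (j x) * r = G0 x
    rw [hjmem x hx]
    have : p x = x := by show x - (j x) * r = x; rw [hjmem x hx]; ring
    rw [this]
    push_cast
    ring
  have hmonoG : StrictMono G := by
    intro x y hxy
    have hjle : j x ≤ j y := by
      apply Int.floor_le_floor
      apply (div_le_div_iff_of_pos_right hr).mpr
      linarith
    show G0 (p x) + (j x) * r < G0 (p y) + (j y) * r
    rcases eq_or_lt_of_le hjle with heq | hlt
    · have hpp : p x < p y := by
        show x - (j x) * r < y - (j y) * r
        rw [← heq]
        linarith
      have := hmono (Set.mem_Icc_of_Ico (hpmem x)) (Set.mem_Icc_of_Ico (hpmem y)) hpp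
      rw [heq]
      linarith
    · have h1 : G0 (p x) < G0 (u + r) := by
        apply hmono (Set.mem_Icc_of_Ico (hpmem x)) (Set.mem_Icc.mpr ⟨by linarith, le_refl _⟩)
        exact (hpmem x).2
      have h2 : G0 u ≤ G0 (p y) := by
        rcases eq_or_lt_of_le (hpmem y).1 with heq2 | hlt2
        · rw [heq2]
        · exact le_of_lt (hmono (Set.mem_Icc.mpr ⟨le_refl _, by linarith⟩)
            (Set.mem_Icc_of_Ico (hpmem y)) hlt2)
      have h3 : ((j x : ℤ) : ℝ) + 1 ≤ ((j y : ℤ) : ℝ) := by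
        have : (j x) + 1 ≤ j y := hlt
        exact_mod_cast this
      rw [hper] at h1
      nlinarith [h1, h2, h3]
  have hsurjG : Function.Surjective G := by
    intro y
    set i := ⌊(y - G0 u)/r⌋ with hi
    have h1 : ((i : ℤ) : ℝ) ≤ (y - G0 u)/r := Int.floor_le _
    have h2 : (y - G0 u)/r < (i : ℤ) + 1 := Int.lt_floor_add_one _
    rw [le_div_iff₀ hr] at h1
    rw [div_lt_iff₀ hr] at h2
    set yb := y - i * r with hyb
    have hyb1 : G0 u ≤ yb := by rw [hyb]; linarith
    have hyb2 : yb < G0 u + r := by rw [hyb]; push_cast at h2; linarith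
    have hsub : Set.Icc (G0 u) (G0 (u+r)) ⊆ G0 '' Set.Icc u (u+r) :=
      intermediate_value_Icc (by linarith) hcont
    obtain ⟨xb, hxbI, hxbE⟩ := hsub ⟨hyb1, by rw [hper]; linarith⟩
    have hxblt : xb < u + r := by
      rcases eq_or_lt_of_le hxbI.2 with heq | hlt
      · exfalso
        rw [heq, hper] at hxbE
        linarith
      · exact hlt
    refine ⟨xb + i * r, ?_⟩
    show G0 (p (xb + i * r)) + (j (xb + i * r)) * r = y
    rw [hpshift xb i, hjshift xb i, hjmem xb ⟨hxbI.1, hxblt⟩]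
    have : p xb = xb := by show xb - (j xb) * r = xb; rw [hjmem xb ⟨hxbI.1, hxblt⟩]; ring
    rw [this, hxbE]
    push_cast
    rw [hyb]
    ring
  refine ⟨G, ⟨?_, hmonoG, hsurjG, ?_, ?_⟩, hGmem⟩
  · intro x
    show G0 (p (x + r)) + (j (x+r)) * r = G0 (p x) + (j x) * r + r
    have e1 : x + r = x + (1 : ℤ) * r := by push_cast; ring
    rw [e1, hpshift x 1, hjshift x 1]
    push_cast
    ring
  · -- CircPL
    refine ⟨{x : ℝ | p x ∈ Bs ∪ {u}}, ?_, ?_, ?_, ?_⟩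
    · have hinj : Set.InjOn p (Set.Ico (0:ℝ) r) := by
        intro x1 hx1 x2 hx2 hpe
        have he : x1 - x2 = ((j x1 - j x2 : ℤ) : ℝ) * r := by
          have : x1 - (j x1) * r = x2 - (j x2) * r := hpe
          push_cast
          linarith
        by_cases hjj : j x1 = j x2
        · rw [hjj] at he; simp at he; linarith
        · exfalso
          have habs : (1:ℝ) ≤ |((j x1 - j x2 : ℤ) : ℝ)| := by
            rw [← Int.cast_abs]
            have : (1:ℤ) ≤ |j x1 - j x2| := Int.one_le_abs (by omega)
            exact_mod_cast this
          have h1 : |x1 - x2| = |((j x1 - j x2 : ℤ) : ℝ)| * r := by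
            rw [he, abs_mul, abs_of_pos hr]
          have h2 : |x1 - x2| < r := by
            rw [abs_lt]
            constructor
            · linarith [hx1.1, hx2.2]
            · linarith [hx1.2, hx2.1]
          nlinarith
      have himg : p '' ({x : ℝ | p x ∈ Bs ∪ {u}} ∩ Set.Ico 0 r) ⊆ Bs ∪ {u} := by
        rintro y ⟨x, ⟨hx1, _⟩, rfl⟩
        exact hx1
      apply Set.Finite.of_finite_image _ (hinj.mono (Set.inter_subset_right))
      exact Set.Finite.subset (hBfin.union (Set.finite_singleton u)) himg
    · intro x hx
      constructor
      · show p (x + r) ∈ Bs ∪ {u}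
        have e1 : x + r = x + (1 : ℤ) * r := by push_cast; ring
        rw [e1, hpshift x 1]
        exact hx
      · show p (x - r) ∈ Bs ∪ {u}
        have e1 : x - r = x + (-1 : ℤ) * r := by push_cast; ring
        rw [e1, hpshift x (-1)]
        exact hx
    · intro x hx
      have hpz : p x ∈ zpows n := by
        rcases hx with h | h
        · exact hBz h
        · rw [h]; exact hu
      have : x = p x + (j x) * r := by show x = (x - (j x) * r) + (j x) * r; ring
      rw [this]
      exact zpows_add hn hpz (zpows_mul hn (zpows_intCast _) hrz)
    · intro x hx
      simp only [Set.mem_setOf_eq, Set.mem_union, Set.mem_singleton_iff] at hx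
      push_neg at hx
      have hpI : p x ∈ Set.Ioo u (u+r) := ⟨lt_of_le_of_ne (hpmem x).1 (Ne.symm hx.2), (hpmem x).2⟩
      obtain ⟨k, c, ε, hε, hl⟩ := hloc (p x) hpI hx.1
      set δ := min ε (min (p x - u) (u + r - p x)) with hδ
      have hδpos : 0 < δ := by
        apply lt_min hε
        apply lt_min
        · linarith [hpI.1]
        · linarith [hpI.2]
      refine ⟨k, c + (j x) * r - (n:ℝ)^k * ((j x) * r), δ, hδpos, ?_⟩
      intro y hy
      set yb := y - (j x) * r with hyb
      have hybx : yb - p x = y - x := by rw [hyb]; show y - (j x) * r - (x - (j x) * r) = y - x; ring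
      have hyd : |yb - p x| < δ := by rw [hybx]; exact hy
      have hyb1 : u < yb := by
        have := min_le_right ε (min (p x - u) (u + r - p x))
        have := min_le_left (p x - u) (u + r - p x)
        rw [abs_lt] at hyd
        have hd1 : δ ≤ p x - u := le_trans (min_le_right _ _) (min_le_left _ _)
        linarith [hyd.1]
      have hyb2 : yb < u + r := by
        rw [abs_lt] at hyd
        have hd2 : δ ≤ u + r - p x := le_trans (min_le_right _ _) (min_le_right _ _)
        linarith [hyd.2]
      have hjy : j y = j x := by
        show ⌊(y - u)/r⌋ = j x
        rw [Int.floor_eq_iff]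
        constructor
        · rw [le_div_iff₀ hr]
          have : yb = y - (j x) * r := hyb
          linarith
        · rw [div_lt_iff₀ hr]
          push_cast
          linarith
      have hpy : p y = yb := by
        show y - (j y) * r = yb
        rw [hjy, hyb]
      have hd0 : |yb - p x| < ε := lt_of_lt_of_le hyd (min_le_left _ _)
      have := hl yb hd0 ⟨hyb1, hyb2⟩
      show G0 (p y) + (j y) * r = (n:ℝ)^k * y + (c + (j x) * r - (n:ℝ)^k * ((j x) * r))
      rw [hpy, hjy, this, hyb]
      ring
  · intro q hq
    have hpz : p q ∈ zpows n := by
      show q - (j q) * r ∈ zpows n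
      exact zpows_sub hn hq (zpows_mul hn (zpows_intCast _) hrz)
    have := hz (p q) hpz (hpmem q)
    show G0 (p q) + (j q) * r ∈ zpows n
    exact zpows_add hn this (zpows_mul hn (zpows_intCast _) hrz)

end Periodize

section GenStep

variable {r : ℝ} {φ : ℝ → ZMod (n-1)}

lemma smon_glue {f g : ℝ → ℝ} {l m h : ℝ} (hlm : l ≤ m) (hmh : m ≤ h)
    (hf : StrictMonoOn f (Set.Icc l m)) (hg : StrictMonoOn g (Set.Icc m h))
    (heq : f m = g m) :
    StrictMonoOn (fun x => if x ≤ m then f x else g x) (Set.Icc l h) := by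
  intro x hx y hy hxy
  simp only []
  rcases le_or_gt x m with h1 | h1
  · rcases le_or_gt y m with h2 | h2
    · rw [if_pos h1, if_pos h2]
      exact hf ⟨hx.1, h1⟩ ⟨le_trans hx.1 (le_of_lt hxy), h2⟩ hxy
    · rw [if_pos h1, if_neg (not_le.mpr h2)]
      have e1 : f x ≤ f m := by
        rcases eq_or_lt_of_le h1 with rfl | hlt
        · exact le_refl _
        · exact le_of_lt (hf ⟨hx.1, h1⟩ ⟨hlm, le_refl _⟩ hlt)
      have e2 : g m < g y := hg ⟨le_refl _, hmh⟩ ⟨le_of_lt h2, hy.2⟩ h2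
      linarith [heq]
  · rw [if_neg (not_le.mpr h1), if_neg (not_le.mpr (lt_trans h1 hxy))]
    exact hg ⟨le_of_lt h1, hx.2⟩ ⟨le_of_lt (lt_trans h1 hxy), hy.2⟩ hxy

lemma genstep (hn : 2 ≤ n) (hφ : IsPhi n φ) (hr : 0 < r) (hrz : r ∈ zpows n)
    {p p' : ℝ} (hp : p ∈ zpows n) (hp' : p' ∈ zpows n) (hpp : φ p = φ p')
    (hdist : |p' - p| < r) :
    ∃ g : Equiv.Perm (AddCircle r), g ∈ BTgen n r ∧ ∃ G : ℝ → ℝ, Good n r G ∧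
      (∀ x : ℝ, g ((x:ℝ) : AddCircle r) = ((G x : ℝ) : AddCircle r)) ∧ G p = p' := by
  set u0 := min p p' with hu0
  set v := max p p' with hv
  have hvu : v - u0 = |p' - p| := by
    rw [hu0, hv]
    exact max_sub_min_eq_abs p p'
  have hvr : v < u0 + r := by linarith [hvu, hdist]
  obtain ⟨α, hαz, hα1, hα2⟩ := zpows_dense hn hvr
  obtain ⟨β, hβz, hβ1, hβ2⟩ := zpows_dense hn hα2
  set uu := β - r with huu
  have huuz : uu ∈ zpows n := zpows_sub hn hβz hrz
  have huup : uu < u0 := by rw [huu]; linarith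
  have hpu : uu < p := lt_of_lt_of_le huup (min_le_left _ _)
  have hpu' : uu < p' := lt_of_lt_of_le huup (min_le_right _ _)
  have hpα : p < α := lt_of_le_of_lt (le_max_left p p') hα1
  have hpα' : p' < α := lt_of_le_of_lt (le_max_right p p') hα1
  obtain ⟨It1, w1, hw1z, hw1a, hw1b, hIt1a, hIt1b, hIt1m, hIt1c, hIt1z, hIt1l⟩ :=
    interp hn hφ huuz hp huuz hp' hpu hpu'
      (by rw [phi_sub hn hφ hp huuz, phi_sub hn hφ hp' huuz, hpp])
  obtain ⟨It2, w2, hw2z, hw2a, hw2b, hIt2a, hIt2b, hIt2m, hIt2c, hIt2z, hIt2l⟩ :=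
    interp hn hφ hp hαz hp' hαz hpα hpα'
      (by rw [phi_sub hn hφ hαz hp, phi_sub hn hφ hαz hp', hpp])
  set H2 : ℝ → ℝ := fun x => if x ≤ α then It2 x else x with hH2
  set G0 : ℝ → ℝ := fun x => if x ≤ p then It1 x else H2 x with hG0
  have hβr : uu + r = β := by rw [huu]; ring
  have hαβ : α < β := hβ1
  have hH2p : H2 p = p' := by
    rw [hH2]; simp only [if_pos (le_of_lt hpα)]; exact hIt2a
  have hG0p : G0 p = p' := by
    rw [hG0]; simp only [if_pos (le_refl p)]; rw [hIt1b]
  have hG0uu : G0 uu = uu := by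
    rw [hG0]; simp only [if_pos (le_of_lt hpu)]; rw [hIt1a]
  have hG0β : G0 β = β := by
    rw [hG0, hH2]
    simp only [if_neg (not_le.mpr (lt_trans hpα hαβ)), if_neg (not_le.mpr hαβ)]
  have hmonoH2 : StrictMonoOn H2 (Set.Icc p β) := by
    rw [hH2]
    exact smon_glue (le_of_lt hpα) (le_of_lt hαβ) hIt2m
      (fun x _ y _ hxy => hxy) (by simpa using hIt2b)
  have hmono : StrictMonoOn G0 (Set.Icc uu (uu + r)) := by
    rw [hG0, hβr]
    exact smon_glue (le_of_lt hpu) (le_of_lt (lt_trans hpα hαβ)) hIt1m hmonoH2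
      (by rw [hIt1b, ← hH2p])
  have hcont : Continuous G0 := by
    rw [hG0]
    apply Continuous.if_le ?_ ?_ continuous_id continuous_const
    · intro x hx
      simp only [id_eq] at hx
      subst hx
      rw [hIt1b, ← hH2p]
    · exact hIt1c
    · rw [hH2]
      apply Continuous.if_le hIt2c continuous_id continuous_id continuous_const
      intro x hx
      simp only [id_eq] at hx
      subst hx
      exact hIt2b
  have hper : G0 (uu + r) = G0 uu + r := by
    rw [hβr, hG0β, hG0uu, huu]; ring
  have hzpr : ∀ q ∈ zpows n, G0 q ∈ zpows n := by
    intro q hq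
    rw [hG0, hH2]
    simp only []
    rcases le_or_gt q p with h | h
    · rw [if_pos h]; exact hIt1z q hq
    · rw [if_neg (not_le.mpr h)]
      rcases le_or_gt q α with h2 | h2
      · rw [if_pos h2]; exact hIt2z q hq
      · rw [if_neg (not_le.mpr h2)]; exact hq
  set Bs : Set ℝ := {w1, w2, p, α} with hBs
  have hBfin : Bs.Finite := by
    rw [hBs]
    exact (Set.finite_singleton α).insert p |>.insert w2 |>.insert w1
  have hBz : Bs ⊆ zpows n := by
    rw [hBs]
    rintro x (rfl | rfl | rfl | rfl)
    · exact hw1z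
    · exact hw2z
    · exact hp
    · exact hαz
  have hloc : ∀ x ∈ Set.Ioo uu (uu+r), x ∉ Bs → ∃ (k : ℤ) (c : ℝ), ∃ ε > 0,
      ∀ y, |y - x| < ε → y ∈ Set.Ioo uu (uu+r) → G0 y = (n:ℝ)^k * y + c := by
    intro x hxI hxB
    rw [hBs] at hxB
    simp only [Set.mem_insert_iff, Set.mem_singleton_iff] at hxB
    push_neg at hxB
    obtain ⟨hxw1, hxw2, hxp, hxα⟩ := hxB
    rcases lt_trichotomy x p with h | h | h
    · obtain ⟨k, c, ε, hε, hl⟩ := hIt1l x hxw1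
      refine ⟨k, c, min ε (p - x), lt_min hε (by linarith), ?_⟩
      intro y hy _
      have hy1 : |y - x| < ε := lt_of_lt_of_le hy (min_le_left _ _)
      have hy2 : y ≤ p := by
        rw [abs_lt] at hy
        have h2 : y - x < p - x := lt_of_lt_of_le hy.2 (min_le_right _ _)
        linarith
      rw [hG0]
      simp only [if_pos hy2]
      exact hl y hy1
    · exact absurd h hxp
    · rcases lt_trichotomy x α with h2 | h2 | h2
      · obtain ⟨k, c, ε, hε, hl⟩ := hIt2l x hxw2
        refine ⟨k, c, min ε (min (x - p) (α - x)), lt_min hε (lt_min (by linarith) (by linarith)), ?_⟩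
        intro y hy _
        have hy1 : |y - x| < ε := lt_of_lt_of_le hy (min_le_left _ _)
        rw [abs_lt] at hy
        have hyp : ¬ (y ≤ p) := by
          push_neg
          have hd : min ε (min (x - p) (α - x)) ≤ x - p := le_trans (min_le_right _ _) (min_le_left _ _)
          linarith [hy.1]
        have hyα : y ≤ α := by
          have hd : min ε (min (x - p) (α - x)) ≤ α - x := le_trans (min_le_right _ _) (min_le_right _ _)
          linarith [hy.2]
        rw [hG0, hH2]
        simp only [if_neg hyp, if_pos hyα]
        exact hl y hy1
      · exact absurd h2 hxα
      · refine ⟨0, 0, x - α, by linarith, ?_⟩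
        intro y hy _
        rw [abs_lt] at hy
        have hyα : ¬ (y ≤ α) := by push_neg; linarith [hy.1]
        have hyp : ¬ (y ≤ p) := by push_neg; linarith [hy.1]
        rw [hG0, hH2]
        simp only [if_neg hyp, if_neg hyα]
        simp
  obtain ⟨G, hGood, hGmem⟩ := periodize hn hr hrz huuz hmono hcont.continuousOn hper
    (fun q hq _ => hzpr q hq) hBfin hBz hloc
  set g := permOf hn hr hGood with hg
  have hlift : ∀ x : ℝ, g ((x:ℝ) : AddCircle r) = ((G x : ℝ) : AddCircle r) :=
    fun x => permOf_coe hn hr hGood x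
  refine ⟨g, ⟨memT_iff.mpr ⟨G, hlift, hGood⟩, α, β, hαβ, ?_⟩, G, hGood, hlift, ?_⟩
  · intro w hw
    have hwI : w ∈ Set.Ico uu (uu + r) := by
      rw [hβr]
      constructor
      · rw [huu]; cases hw with | intro h1 h2 => linarith
      · exact hw.2
    have hG0w : G0 w = w := by
      rw [hG0, hH2]
      simp only [if_neg (not_le.mpr (lt_trans hpα hw.1)), if_neg (not_le.mpr hw.1)]
    rw [hlift w, hGmem w hwI, hG0w]
  · have hpI : p ∈ Set.Ico uu (uu + r) := by
      rw [hβr]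
      exact ⟨le_of_lt hpu, lt_trans hpα hαβ⟩
    rw [hGmem p hpI, hG0p]

end GenStep

section MoveTo

variable {r : ℝ} {φ : ℝ → ZMod (n-1)}

lemma move_to (hn : 2 ≤ n) (hφ : IsPhi n φ) (hr : 0 < r) (hrz : r ∈ zpows n)
    {q : ℝ} (hq : q ∈ zpows n) (hq0 : φ q = 0) :
    ∃ h ∈ BTgrp n r, ∃ H : ℝ → ℝ, Good n r H ∧
      (∀ x : ℝ, h ((x:ℝ) : AddCircle r) = ((H x : ℝ) : AddCircle r)) ∧ H 0 = q := by
  obtain ⟨t, ht⟩ := pow_unbounded_of_one_lt (|q| / r) (none' hn)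
  have hnt : (0:ℝ) < (n:ℝ)^t := by positivity
  have hqt : |q| < (n:ℝ)^t * r := by
    rw [div_lt_iff₀ hr] at ht
    linarith
  set d := q * ((n:ℝ)^t)⁻¹ with hd
  have hinv : ((n:ℝ)^t)⁻¹ = (n:ℝ)^(-(t:ℤ)) := by rw [zpow_neg, zpow_natCast]
  have hdz : d ∈ zpows n := by
    rw [hd, hinv]
    exact zpows_mul hn hq (zpows_zpow _)
  have hφd : φ d = 0 := by
    rw [hd, hφ.2.1 q hq _ (by rw [hinv]; exact zpows_zpow _), hq0, zero_mul]
  have hddist : |d| < r := by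
    rw [hd, abs_mul, abs_of_pos (inv_pos.mpr hnt)]
    calc |q| * ((n:ℝ)^t)⁻¹ < ((n:ℝ)^t * r) * ((n:ℝ)^t)⁻¹ :=
          mul_lt_mul_of_pos_right hqt (inv_pos.mpr hnt)
      _ = r := by field_simp
  have himd : ∀ i : ℕ, ((i:ℝ) * d) ∈ zpows n := by
    intro i
    exact zpows_mul hn (zpows_natCast i) hdz
  have hφmd : ∀ i : ℕ, φ ((i:ℝ) * d) = 0 := by
    intro i
    rw [hφ.2.1 _ (zpows_natCast i) _ hdz, hφd, mul_zero]
  have claim : ∀ i : ℕ, ∃ h ∈ BTgrp n r, ∃ H : ℝ → ℝ, Good n r H ∧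
      (∀ x : ℝ, h ((x:ℝ) : AddCircle r) = ((H x : ℝ) : AddCircle r)) ∧ H 0 = (i:ℝ) * d := by
    intro i
    induction i with
    | zero =>
        refine ⟨1, Subgroup.one_mem _, id, good_id hn, fun x => rfl, by simp⟩
    | succ i ih =>
        obtain ⟨h, hmem, H, hH, hlift, hval⟩ := ih
        obtain ⟨g, hgmem, G, hG, hliftg, hGval⟩ := genstep hn hφ hr hrz (himd i)
          (himd (i+1)) (by rw [hφmd i, hφmd (i+1)]) (by
            push_cast
            rw [show ((i:ℝ)+1) * d - (i:ℝ) * d = d by ring]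
            exact hddist)
        refine ⟨g * h, Subgroup.mul_mem _ (Subgroup.subset_closure hgmem) hmem,
          G ∘ H, good_comp hr hn hG hH, fun x => lift_mul hliftg hlift x, ?_⟩
        show G (H 0) = _
        rw [hval]
        exact hGval
  obtain ⟨h, hmem, H, hH, hlift, hval⟩ := claim (n^t)
  refine ⟨h, hmem, H, hH, hlift, ?_⟩
  rw [hval, hd]
  push_cast
  field_simp

end MoveTo

section FixZero

variable {r : ℝ} {φ : ℝ → ZMod (n-1)}

lemma fix_zero (hn : 2 ≤ n) (hφ : IsPhi n φ) (hr : 0 < r) (hrz : r ∈ zpows n)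
    {f : Equiv.Perm (AddCircle r)} {F : ℝ → ℝ} (hF : Good n r F)
    (hlift : ∀ x : ℝ, f ((x:ℝ) : AddCircle r) = ((F x : ℝ) : AddCircle r))
    (h0 : F 0 = 0) : f ∈ BTgrp n r := by
  obtain ⟨B, hBfin, hBper, hBz, hBl⟩ := hF.2.2.2.1
  -- a break-free initial interval
  have hδ0 : ∃ δ0 : ℝ, 0 < δ0 ∧ δ0 ≤ r ∧ ∀ x ∈ B, x ∉ Set.Ioo 0 δ0 := by
    have hSfin : (B ∩ Set.Ioo 0 r).Finite :=
      Set.Finite.subset (perfin hr hBfin hBper 0 r)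
        (Set.inter_subset_inter_right _ Set.Ioo_subset_Icc_self)
    by_cases hS : (B ∩ Set.Ioo 0 r).Nonempty
    · have hne : hSfin.toFinset.Nonempty := by
        rwa [Set.Finite.toFinset_nonempty]
      set m := hSfin.toFinset.min' hne with hm
      have hmS : m ∈ B ∩ Set.Ioo 0 r := by
        have := hSfin.toFinset.min'_mem hne
        rwa [Set.Finite.mem_toFinset] at this
      refine ⟨m, hmS.2.1, le_of_lt hmS.2.2, ?_⟩
      rintro x hxB ⟨hx1, hx2⟩
      have hxS : x ∈ hSfin.toFinset := by
        rw [Set.Finite.mem_toFinset]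
        exact ⟨hxB, hx1, lt_trans hx2 hmS.2.2⟩
      have := hSfin.toFinset.min'_le x hxS
      rw [← hm] at this
      linarith
    · refine ⟨r, hr, le_refl _, ?_⟩
      rintro x hxB hxI
      exact hS ⟨x, hxB, hxI⟩
  obtain ⟨δ0, hδ0pos, hδ0r, hδ0B⟩ := hδ0
  obtain ⟨k, c, haff⟩ := affine_on_Icc hn hF hδ0pos
    (fun x hx => hBl x (fun hxB => hδ0B x hxB hx))
  have hc : c = 0 := by
    have := haff 0 ⟨le_refl _, le_of_lt hδ0pos⟩
    rw [h0] at this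
    linarith
  rw [hc] at haff
  obtain ⟨δ, hδz, hδpos, hδlt⟩ := zpows_dense hn hδ0pos
  have hnk : (0:ℝ) < (n:ℝ)^k := zpow_pos (by positivity) _
  set a1 := (n:ℝ)^k * δ with ha1
  have hFδ : F δ = a1 := by
    have := haff δ ⟨le_of_lt hδpos, le_of_lt hδlt⟩
    rw [this]; ring
  have ha1pos : 0 < a1 := by rw [ha1]; positivity
  have hδr : δ < r := lt_of_lt_of_le hδlt hδ0r
  have ha1r : a1 < r := by
    have h1 : F δ < F r := hF.2.1 hδr
    have h2 : F r = r := by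
      have h3 := hF.1 0
      rw [zero_add, h0, zero_add] at h3
      exact h3
    rw [hFδ, h2] at h1
    exact h1
  have ha1z : a1 ∈ zpows n := zpows_mul hn (zpows_zpow k) hδz
  have hφa1 : φ a1 = φ δ := by
    have := phi_affine hn hφ hδz zpows_zero k
    rw [add_zero] at this
    rw [ha1, this, phi_zero hn hφ, add_zero]
  have hmaxr : max δ a1 < r := max_lt hδr ha1r
  obtain ⟨α, hαz, hα1, hα2⟩ := zpows_dense hn hmaxr
  have hδα : δ < α := lt_of_le_of_lt (le_max_left _ _) hα1
  have ha1α : a1 < α := lt_of_le_of_lt (le_max_right _ _) hα1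
  obtain ⟨It, w, hwz, hwa, hwb, hIta, hItb, hItm, hItc, hItz, hItl⟩ :=
    interp hn hφ hδz hαz ha1z hαz hδα ha1α
      (by rw [phi_sub hn hφ hαz hδz, phi_sub hn hφ hαz ha1z, hφa1])
  set H2 : ℝ → ℝ := fun x => if x ≤ α then It x else x with hH2
  set G0 : ℝ → ℝ := fun x => if x ≤ δ then (n:ℝ)^k * x else H2 x with hG0
  have hG0δ : G0 δ = a1 := by
    rw [hG0]; simp only [if_pos (le_refl δ)]; exact ha1.symm
  have hH2δ : H2 δ = a1 := by
    rw [hH2]; simp only [if_pos (le_of_lt hδα)]; exact hIta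
  have hmono : StrictMonoOn G0 (Set.Icc 0 (0 + r)) := by
    rw [hG0, zero_add]
    apply smon_glue (le_of_lt hδpos) (le_of_lt hδr)
      (fun x _ y _ hxy => by exact mul_lt_mul_of_pos_left hxy hnk)
    · apply smon_glue (le_of_lt hδα) (le_of_lt hα2) hItm (fun x _ y _ hxy => hxy)
      simpa using hItb
    · rw [hH2δ, ha1]
  have hcont : Continuous G0 := by
    rw [hG0]
    apply Continuous.if_le (continuous_const.mul continuous_id) ?_ continuous_id continuous_const
    · intro x hx
      simp only [id_eq] at hx ⊢
      rw [hx, hH2δ, ha1]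
      rfl
    · rw [hH2]
      apply Continuous.if_le hItc continuous_id continuous_id continuous_const
      intro x hx
      simp only [id_eq] at hx
      subst hx
      exact hItb
  have hG00 : G0 0 = 0 := by
    rw [hG0]; simp only [if_pos (le_of_lt hδpos)]; ring
  have hG0r : G0 r = r := by
    rw [hG0, hH2]
    simp only [if_neg (not_le.mpr hδr), if_neg (not_le.mpr hα2)]
  have hper : G0 (0 + r) = G0 0 + r := by
    rw [zero_add, hG0r, hG00, zero_add]
  have hzpr : ∀ q' ∈ zpows n, G0 q' ∈ zpows n := by
    intro q' hq'
    rw [hG0, hH2]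
    simp only []
    rcases le_or_gt q' δ with h | h
    · rw [if_pos h]
      exact zpows_mul hn (zpows_zpow k) hq'
    · rw [if_neg (not_le.mpr h)]
      rcases le_or_gt q' α with h2 | h2
      · rw [if_pos h2]; exact hItz q' hq'
      · rw [if_neg (not_le.mpr h2)]; exact hq'
  set Bs : Set ℝ := {δ, w, α} with hBs
  have hBsfin : Bs.Finite := by
    rw [hBs]
    exact (Set.finite_singleton α).insert w |>.insert δ
  have hBsz : Bs ⊆ zpows n := by
    rw [hBs]
    rintro x (rfl | rfl | rfl)
    · exact hδz
    · exact hwz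
    · exact hαz
  have hloc : ∀ x ∈ Set.Ioo (0:ℝ) (0+r), x ∉ Bs → ∃ (k' : ℤ) (c' : ℝ), ∃ ε > 0,
      ∀ y, |y - x| < ε → y ∈ Set.Ioo (0:ℝ) (0+r) → G0 y = (n:ℝ)^k' * y + c' := by
    intro x hxI hxB
    rw [hBs] at hxB
    simp only [Set.mem_insert_iff, Set.mem_singleton_iff] at hxB
    push_neg at hxB
    obtain ⟨hxδ, hxw, hxα⟩ := hxB
    rcases lt_trichotomy x δ with h | h | h
    · refine ⟨k, 0, δ - x, by linarith, ?_⟩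
      intro y hy _
      rw [abs_lt] at hy
      have hyδ : y ≤ δ := by linarith [hy.2]
      rw [hG0]
      simp only [if_pos hyδ]
      ring
    · exact absurd h hxδ
    · rcases lt_trichotomy x α with h2 | h2 | h2
      · obtain ⟨k', c', ε, hε, hl⟩ := hItl x hxw
        refine ⟨k', c', min ε (min (x - δ) (α - x)),
          lt_min hε (lt_min (by linarith) (by linarith)), ?_⟩
        intro y hy _
        have hy1 : |y - x| < ε := lt_of_lt_of_le hy (min_le_left _ _)
        rw [abs_lt] at hy
        have hyδ : ¬ (y ≤ δ) := by
          push_neg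
          have hd : min ε (min (x - δ) (α - x)) ≤ x - δ :=
            le_trans (min_le_right _ _) (min_le_left _ _)
          linarith [hy.1]
        have hyα : y ≤ α := by
          have hd : min ε (min (x - δ) (α - x)) ≤ α - x :=
            le_trans (min_le_right _ _) (min_le_right _ _)
          linarith [hy.2]
        rw [hG0, hH2]
        simp only [if_neg hyδ, if_pos hyα]
        exact hl y hy1
      · exact absurd h2 hxα
      · refine ⟨0, 0, x - α, by linarith, ?_⟩
        intro y hy _
        rw [abs_lt] at hy
        have hyα : ¬ (y ≤ α) := by push_neg; linarith [hy.1]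
        have hyδ : ¬ (y ≤ δ) := by push_neg; linarith [hy.1]
        rw [hG0, hH2]
        simp only [if_neg hyδ, if_neg hyα]
        simp
  obtain ⟨G, hGood, hGmem⟩ := periodize hn hr hrz zpows_zero hmono hcont.continuousOn hper
    (fun q' hq' _ => hzpr q' hq') hBsfin hBsz hloc
  set g := permOf hn hr hGood with hg
  have hliftg : ∀ x : ℝ, g ((x:ℝ) : AddCircle r) = ((G x : ℝ) : AddCircle r) :=
    fun x => permOf_coe hn hr hGood x
  have hα0 : 0 < α := lt_trans hδpos hδα
  have hgBT : g ∈ BTgen n r := by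
    refine ⟨memT_iff.mpr ⟨G, hliftg, hGood⟩, α, r, hα2, ?_⟩
    intro y hy
    have hyI : y ∈ Set.Ico (0:ℝ) (0 + r) := ⟨le_of_lt (lt_trans hα0 hy.1), by rw [zero_add]; exact hy.2⟩
    have hG0y : G0 y = y := by
      rw [hG0, hH2]
      simp only [if_neg (not_le.mpr (lt_trans hδα hy.1)), if_neg (not_le.mpr hy.1)]
    rw [hliftg y, hGmem y hyI, hG0y]
  -- compute the inverse of G on (0, a1)
  obtain ⟨hGi, hgli, hgri⟩ := good_inv hr hn hGood
  have hkk : (n:ℝ)^k * (n:ℝ)^(-k) = 1 := by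
    rw [← zpow_add₀ (nne hn)]; simp
  have hGival : ∀ y ∈ Set.Ioo (0:ℝ) a1, Function.invFun G y = (n:ℝ)^(-k) * y := by
    intro y hy
    set z := (n:ℝ)^(-k) * y with hz
    have hzpos : 0 < z := by
      rw [hz]
      exact mul_pos (zpow_pos (by positivity) _) hy.1
    have hzδ : z < δ := by
      have h1 : (n:ℝ)^(-k) * y < (n:ℝ)^(-k) * a1 :=
        mul_lt_mul_of_pos_left hy.2 (zpow_pos (by positivity) _)
      have h2 : (n:ℝ)^(-k) * a1 = δ := by
        rw [ha1, ← mul_assoc, show (n:ℝ)^(-k) * (n:ℝ)^k = 1 by rw [← zpow_add₀ (nne hn)]; simp,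
          one_mul]
      rw [hz]; linarith
    have hGz : G z = y := by
      have hzI : z ∈ Set.Ico (0:ℝ) (0 + r) := ⟨le_of_lt hzpos, by rw [zero_add]; linarith⟩
      rw [hGmem z hzI, hG0]
      simp only [if_pos (le_of_lt hzδ)]
      rw [hz, ← mul_assoc, hkk, one_mul]
    rw [← hGz, hgli]
  -- f2 = f * g⁻¹ is the identity near 0⁺
  set f2 := f * g⁻¹ with hf2
  have hliftgi := lift_inv hn hr hGood hliftg
  have hliftf2 : ∀ x : ℝ, f2 ((x:ℝ) : AddCircle r) = ((F (Function.invFun G x) : ℝ) : AddCircle r) :=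
    fun x => lift_mul hlift hliftgi x
  have hf2BT : f2 ∈ BTgen n r := by
    refine ⟨memT_iff.mpr ⟨F ∘ Function.invFun G, fun x => hliftf2 x, good_comp hr hn hF hGi⟩,
      0, a1, ha1pos, ?_⟩
    intro y hy
    rw [hliftf2 y, hGival y hy]
    have hyδ0 : (n:ℝ)^(-k) * y ∈ Set.Icc (0:ℝ) δ0 := by
      constructor
      · exact le_of_lt (mul_pos (zpow_pos (by positivity) _) hy.1)
      · have h1 : (n:ℝ)^(-k) * y < (n:ℝ)^(-k) * a1 :=
          mul_lt_mul_of_pos_left hy.2 (zpow_pos (by positivity) _)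
        have h2 : (n:ℝ)^(-k) * a1 = δ := by
          rw [ha1, ← mul_assoc, show (n:ℝ)^(-k) * (n:ℝ)^k = 1 by
            rw [← zpow_add₀ (nne hn)]; simp, one_mul]
        linarith [hy.2, h1, h2, hδlt]
    have := haff _ hyδ0
    rw [this, ← mul_assoc, hkk, one_mul, add_zero]
  have hfinal : f = f2 * g := by
    rw [hf2, inv_mul_cancel_right]
  rw [hfinal]
  exact Subgroup.mul_mem _ (Subgroup.subset_closure hf2BT) (Subgroup.subset_closure hgBT)

end FixZero

end St8

/-- `BT_{n,r}` consists exactly of those elements of `T_{n,r}` that map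
`p_r(Δₙ)` onto itself. -/
theorem stmt_8 (n : ℕ) (hn : 2 ≤ n) (r : ℕ) (hr : 1 ≤ r)
    (φ : ℝ → ZMod (n - 1)) (hφ : IsPhi n φ)
    (f : Equiv.Perm (AddCircle (r : ℝ))) :
    f ∈ BTgrp n (r : ℝ) ↔
      MemT n (r : ℝ) ⇑f ∧
        ⇑f '' DeltaCircle n (r : ℝ) φ = DeltaCircle n (r : ℝ) φ := by
  have hr0 : (0:ℝ) < (r:ℝ) := by
    have : (1:ℝ) ≤ (r:ℝ) := by exact_mod_cast hr
    linarith
  have hrz : ((r:ℕ) : ℝ) ∈ zpows n := St8.zpows_natCast r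
  constructor
  · intro hf
    exact St8.closure_le_rhs hn hφ hr0 hrz f hf
  · rintro ⟨hmem, himg⟩
    obtain ⟨F, hlift, hF⟩ := St8.memT_iff.mp hmem
    obtain ⟨qs, hqs, hqs0, heq⟩ := St8.exists_qstar hn hφ hlift himg
    obtain ⟨h, hhBT, H, hH, hliftH, hH0⟩ := St8.move_to hn hφ hr0 hrz hqs hqs0
    obtain ⟨m, hm⟩ := St8.coe_eq_iff.mp heq
    obtain ⟨hHi, hli, hri⟩ := St8.good_inv hr0 hn hH
    have hliftHi := St8.lift_inv hn hr0 hH hliftH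
    have hliftf' : ∀ x : ℝ, (h⁻¹ * f) ((x:ℝ) : AddCircle (r:ℝ)) =
        ((Function.invFun H (F x) : ℝ) : AddCircle (r:ℝ)) :=
      fun x => St8.lift_mul hliftHi hlift x
    have hval : Function.invFun H (F 0) = - m * r := by
      have hF0 : F 0 = qs + (-m : ℤ) * (r:ℝ) := by push_cast; linarith [hm]
      have hHiqs : Function.invFun H qs = 0 := by
        rw [← hH0, hli]
      rw [hF0, St8.equi_zsmul hHi.1 (-m) qs, hHiqs]
      push_cast
      ring
    set F2 : ℝ → ℝ := fun x => Function.invFun H (F x) - (-m : ℤ) * (r:ℝ) with hF2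
    have hGoodF2 : St8.Good n (r:ℝ) F2 := by
      have hcomp : St8.Good n (r:ℝ) (Function.invFun H ∘ F) :=
        St8.good_comp hr0 hn hHi hF
      exact St8.good_shift hn hcomp (-m) hrz
    have hF20 : F2 0 = 0 := by
      rw [hF2]
      show Function.invFun H (F 0) - (-m : ℤ) * (r:ℝ) = 0
      rw [hval]
      push_cast
      ring
    have hliftf2 : ∀ x : ℝ, (h⁻¹ * f) ((x:ℝ) : AddCircle (r:ℝ)) =
        ((F2 x : ℝ) : AddCircle (r:ℝ)) := by
      intro x
      rw [hliftf' x, St8.coe_eq_iff]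
      refine ⟨m, ?_⟩
      show F2 x = Function.invFun H (F x) + (m:ℝ) * (r:ℝ)
      rw [hF2]
      push_cast
      ring
    have hmemBT : (h⁻¹ * f) ∈ BTgrp n (r:ℝ) :=
      St8.fix_zero hn hφ hr0 hrz hGoodF2 hliftf2 hF20
    have hfinal : f = h * (h⁻¹ * f) := by
      rw [mul_inv_cancel_left]
    rw [hfinal]
    exact Subgroup.mul_mem _ hhBT hmemBT
end
end

section
/- Let h : S¹ → S¹ be an orientation-preserving homeomorphism with h(ℤ[1/2]) = ℤ[1/2], and assume that both h ∘ ν₂ ∘ h⁻¹ and h⁻¹ ∘ ν₂ ∘ h are everywhere-defined elements of T̄_{2,1}. Then h normalizes T_{2,1}, i.e., h · T_{2,1} · h⁻¹ = T_{2,1}. -/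
/-!
Lift everything to `ℝ`: `h` becomes an order isomorphism `E` commuting with `x ↦ x + 1`, and
`h ν₂ h⁻¹` a piecewise-linear map `G` with `E (2x) = G (E x) + m`, hence
`E (2ᵇ x) = Gᵇ (E x) + C_b`. On an interval where the lift `F` of `f ∈ T_{2,1}` is
`u ↦ 2ᵏ u + c` with `c` dyadic, pick `b` with `2ᵇ c ∈ ℤ` and `t = b + k ≥ 0`; since `E`
commutes with integer translations, `Gᵇ ∘ (E F E⁻¹) = Gᵗ + C` there. So `E F E⁻¹` is locally
affine with slopes powers of `2` away from the breaks of `Gᵗ` and the preimages of the breaks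
of `Gᵇ`, all of which are dyadic and locally finite. The other inclusion is the same argument
for `h⁻¹`.
-/

noncomputable section

/-- An everywhere-defined element of `T̄_{n,r}`: a continuous, locally orientation-preserving
local homeomorphism of the circle `S_r` (encoded by a strictly monotone continuous lift `G`
with `G (x + r) = G x + d·r` for some degree `d ≥ 1`), piecewise linear with finitely many
breaks, all breaks in `ℤ[1/n]`, all slopes integral powers of `n`, and mapping `ℤ[1/n]`
into itself. -/
def MemTbar (n : ℕ) (r : ℝ) (g : AddCircle r → AddCircle r) : Prop :=
  ∃ (G : ℝ → ℝ) (d : ℕ), 0 < d ∧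
    (∀ x : ℝ, g (x : AddCircle r) = ((G x : ℝ) : AddCircle r)) ∧
    (∀ x : ℝ, G (x + r) = G x + (d : ℝ) * r) ∧
    StrictMono G ∧ Continuous G ∧ CircPL n r G ∧
    (∀ q ∈ zpows n, G q ∈ zpows n)

/-- An orientation-preserving homeomorphism of the circle `S_r`, encoded by the existence
of a strictly monotone surjective lift commuting with `x ↦ x + r`. -/
def OrientedHomeo (r : ℝ) (h : AddCircle r → AddCircle r) : Prop :=
  ∃ H : ℝ → ℝ,
    (∀ x : ℝ, h (x : AddCircle r) = ((H x : ℝ) : AddCircle r)) ∧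
    (∀ x : ℝ, H (x + r) = H x + r) ∧
    StrictMono H ∧ Function.Surjective H

/-- The doubling map `ν₂ : S¹ → S¹`, `x ↦ 2x (mod 1)`. -/
def nu2 : AddCircle (1 : ℝ) → AddCircle (1 : ℝ) := fun z => z + z

/-- The image of the dyadic rationals `ℤ[1/2]` in the circle `S¹ = ℝ/ℤ`. -/
def dyadicCircle : Set (AddCircle (1 : ℝ)) :=
  {z : AddCircle (1 : ℝ) | ∃ q ∈ zpows 2, z = ((q : ℝ) : AddCircle (1 : ℝ))}

open Set Filter Topology Function

section Zpows

variable {n : ℕ}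

def zpowsSubring (n : ℕ) [NeZero n] : Subring ℝ where
  carrier := zpows n
  mul_mem' := by
    rintro _ _ ⟨a, b, rfl⟩ ⟨a', b', rfl⟩
    exact ⟨a * a', b + b', by rw [zpow_add₀ (NeZero.ne _)]; push_cast; ring⟩
  one_mem' := ⟨1, 0, by simp⟩
  add_mem' := by
    rintro _ _ ⟨a, b, rfl⟩ ⟨a', b', rfl⟩
    refine ⟨a * n ^ (b - min b b').toNat + a' * n ^ (b' - min b b').toNat, min b b', ?_⟩
    push_cast
    rw [← zpow_natCast, ← zpow_natCast, Int.toNat_of_nonneg (by omega),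
      Int.toNat_of_nonneg (by omega), add_mul, mul_assoc, mul_assoc, ← zpow_add₀ (NeZero.ne _),
      ← zpow_add₀ (NeZero.ne _)]
    simp
  zero_mem' := ⟨0, 0, by simp⟩
  neg_mem' := by
    rintro _ ⟨a, b, rfl⟩
    exact ⟨-a, b, by push_cast; ring⟩

@[simp]
theorem mem_zpowsSubring [NeZero n] {x : ℝ} : x ∈ zpowsSubring n ↔ x ∈ zpows n := Iff.rfl

theorem zpow_mem_zpows (n : ℕ) (k : ℤ) : (n : ℝ) ^ k ∈ zpows n := ⟨1, k, by simp⟩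

theorem dense_zpows (hn : 1 < n) : Dense (zpows n) := by
  have : NeZero n := ⟨by omega⟩
  refine (zpowsSubring n).toAddSubgroup.dense_of_not_isolated_zero fun ε hε => ?_
  obtain ⟨j, hj⟩ := exists_pow_lt_of_lt_one hε
    (inv_lt_one_of_one_lt₀ (by exact_mod_cast hn : (1 : ℝ) < n))
  exact ⟨(n : ℝ)⁻¹ ^ j, by simpa using zpow_mem_zpows n (-j), by positivity, hj⟩

theorem exists_pow_mul_eq_intCast [NeZero n] {c : ℝ} (hc : c ∈ zpows n) (k : ℤ) :
    ∃ (b : ℕ) (N : ℤ), -k ≤ b ∧ (n : ℝ) ^ b * c = N := by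
  obtain ⟨a, e, rfl⟩ := hc
  refine ⟨(-k).toNat + (-e).toNat, a * n ^ ((-k).toNat + (-e).toNat + e).toNat, by omega, ?_⟩
  push_cast
  rw [← zpow_natCast, ← zpow_natCast, Int.toNat_of_nonneg (by omega), zpow_add₀ (NeZero.ne _)]
  push_cast
  ring

end Zpows

theorem IsCompact.finite_inter_of_forall_mem_nhds {X : Type*} [TopologicalSpace X] [T1Space X]
    {K S : Set X} (hK : IsCompact K) (h : ∀ x ∈ K, ∃ U ∈ 𝓝 x, (U ∩ S).Finite) :
    (K ∩ S).Finite := by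
  have hcd : Sᶜ ∈ codiscreteWithin K := by
    refine codiscreteWithin_iff_locallyFiniteComplementWithin.2 fun x hx => ?_
    obtain ⟨U, hU, hfin⟩ := h x hx
    exact ⟨U, hU, hfin.subset fun y ⟨hyU, _, hyS⟩ => ⟨hyU, not_not.1 hyS⟩⟩
  simpa [sdiff_compl] using hK.finite_sdiff_of_mem_codiscreteWithin hcd

theorem StrictMono.finite_preimage_inter_Icc {α β : Type*} [LinearOrder α] [Preorder β]
    {φ : α → β} {B : Set β} (hφ : StrictMono φ) (hB : ∀ a b, (B ∩ Icc a b).Finite) (a b : α) :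
    (φ ⁻¹' B ∩ Icc a b).Finite :=
  ((hB (φ a) (φ b)).preimage hφ.injective.injOn).subset
    fun _ ⟨hx, ha, hb⟩ => ⟨hx, hφ.monotone ha, hφ.monotone hb⟩

theorem finite_inter_Icc_of_add_one_mem {B : Set ℝ} (hB : (B ∩ Ico 0 1).Finite)
    (hper : ∀ x ∈ B, x + 1 ∈ B ∧ x - 1 ∈ B) (a b : ℝ) : (B ∩ Icc a b).Finite := by
  have hint : ∀ (m : ℤ), ∀ x ∈ B, x + m ∈ B := by
    intro m
    induction m using Int.induction_on with
    | zero => simp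
    | succ j ih => exact fun x hx => by simpa [add_assoc] using (hper _ (ih x hx)).1
    | pred j ih => exact fun x hx => by simpa [sub_eq_add_neg, add_assoc] using (hper _ (ih x hx)).2
  refine ((Finset.Icc ⌊a⌋ ⌊b⌋).finite_toSet.biUnion fun m _ => hB.image (· + (m : ℝ))).subset ?_
  rintro x ⟨hxB, hxa, hxb⟩
  refine mem_biUnion (Finset.mem_Icc.2 ⟨Int.floor_mono hxa, Int.floor_mono hxb⟩)
    ⟨Int.fract x, ⟨?_, Int.fract_nonneg x, Int.fract_lt_one x⟩, Int.fract_add_floor x⟩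
  simpa [Int.fract, sub_eq_add_neg] using hint (-⌊x⌋) x hxB

theorem exists_Ioo_inter_subset_singleton {S : Set ℝ} (hS : ∀ a b, (S ∩ Icc a b).Finite)
    (u : ℝ) : ∃ a b, u ∈ Ioo a b ∧ S ∩ Ioo a b ⊆ {u} := by
  have hT : ((S ∩ Icc (u - 1) (u + 1)) \ {u})ᶜ ∩ Ioo (u - 1) (u + 1) ∈ 𝓝 u :=
    inter_mem ((hS _ _).sdiff.isClosed.isOpen_compl.mem_nhds (by simp))
      (Ioo_mem_nhds (by linarith) (by linarith))
  obtain ⟨a, b, hab, hsub⟩ := mem_nhds_iff_exists_Ioo_subset.1 hT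
  refine ⟨a, b, hab, fun v ⟨hvS, hv⟩ => ?_⟩
  obtain ⟨hvT, hvI⟩ := hsub hv
  by_contra hne
  exact hvT ⟨⟨hvS, Ioo_subset_Icc_self hvI⟩, hne⟩

section AffAt

variable {n : ℕ} {f g : ℝ → ℝ} {x : ℝ}

def AffAt (n : ℕ) (f : ℝ → ℝ) (x : ℝ) : Prop :=
  ∃ (k : ℤ) (c : ℝ), f =ᶠ[𝓝 x] fun y => (n : ℝ) ^ k * y + c

theorem affAt_iff_exists_pos : AffAt n f x ↔
    ∃ (k : ℤ) (c : ℝ), ∃ ε > 0, ∀ y : ℝ, |y - x| < ε → f y = (n : ℝ) ^ k * y + c := by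
  simp only [AffAt, EventuallyEq, Metric.eventually_nhds_iff, Real.dist_eq]

theorem AffAt.continuousAt (h : AffAt n f x) : ContinuousAt f x := by
  obtain ⟨k, c, hf⟩ := h
  exact (continuous_const.mul continuous_id |>.add continuous_const).continuousAt.congr hf.symm

theorem AffAt.congr (h : AffAt n f x) (hfg : f =ᶠ[𝓝 x] g) : AffAt n g x := by
  obtain ⟨k, c, hf⟩ := h
  exact ⟨k, c, hfg.symm.trans hf⟩

theorem affAt_add_const_iff (C : ℝ) : AffAt n (fun y => f y + C) x ↔ AffAt n f x := by
  constructor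
  · rintro ⟨k, c, hf⟩
    refine ⟨k, c - C, ?_⟩
    filter_upwards [hf] with y hy
    linarith
  · rintro ⟨k, c, hf⟩
    refine ⟨k, c + C, ?_⟩
    filter_upwards [hf] with y hy
    rw [hy, add_assoc]

theorem AffAt.comp [NeZero n] (hg : AffAt n g (f x)) (hf : AffAt n f x) :
    AffAt n (g ∘ f) x := by
  obtain ⟨l, d, hg⟩ := hg
  have hfc := hf.continuousAt
  obtain ⟨k, c, hf⟩ := hf
  refine ⟨l + k, (n : ℝ) ^ l * c + d, ?_⟩
  filter_upwards [hfc.eventually hg, hf] with y hgy hfy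
  rw [comp_apply, hgy, hfy, zpow_add₀ (NeZero.ne _)]
  ring

theorem AffAt.of_comp [NeZero n] (hgf : AffAt n (g ∘ f) x) (hg : AffAt n g (f x))
    (hf : ContinuousAt f x) : AffAt n f x := by
  obtain ⟨l, d, hg⟩ := hg
  obtain ⟨k, c, hgf⟩ := hgf
  refine ⟨k - l, (c - d) * (n : ℝ) ^ (-l), ?_⟩
  filter_upwards [hf.eventually hg, hgf] with y hgy hgfy
  have hl : (n : ℝ) ^ l ≠ 0 := zpow_ne_zero _ (NeZero.ne _)
  rw [comp_apply, hgy] at hgfy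
  rw [zpow_sub₀ (NeZero.ne _), zpow_neg]
  field_simp
  linarith

theorem AffAt.comp_add_const [NeZero n] {t : ℝ} (h : AffAt n f (x + t)) :
    AffAt n (fun y => f (y + t)) x :=
  h.comp (f := (· + t)) ⟨0, t, Eventually.of_forall fun y => by simp⟩

theorem affAt_add_one_iff [NeZero n] (hf : ∀ y, f (y + 1) = f y + 1) :
    AffAt n f (x + 1) ↔ AffAt n f x := by
  have hshift : (fun y => f (y + 1)) = fun y => f y + 1 := funext hf
  constructor
  · intro h
    simpa [hshift, affAt_add_const_iff] using h.comp_add_const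
  · intro h
    have : AffAt n (fun y => f (y + 1)) (x + 1 + -1) := by
      simpa [hshift, affAt_add_const_iff] using h
    simpa using this.comp_add_const

theorem isOpen_setOf_affAt : IsOpen {x | AffAt n f x} :=
  isOpen_iff_mem_nhds.2 fun _ ⟨k, c, hf⟩ => hf.eventuallyEq_nhds.mono fun _ hy => ⟨k, c, hy⟩

theorem affine_eq_of_eventuallyEq {a b a' b' : ℝ}
    (h : (fun y => a * y + b) =ᶠ[𝓝 x] fun y => a' * y + b') : a = a' ∧ b = b' := by
  have ha : a = a' := by simpa using h.deriv_eq
  have hx := h.eq_of_nhds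
  simp only [ha, add_right_inj] at hx
  exact ⟨ha, hx⟩

theorem exists_eqOn_of_isPreconnected {U : Set ℝ} (hUo : IsOpen U) (hU : IsPreconnected U)
    (h : ∀ y ∈ U, AffAt n f y) : ∃ (k : ℤ) (c : ℝ), EqOn f (fun y => (n : ℝ) ^ k * y + c) U := by
  rcases U.eq_empty_or_nonempty with rfl | ⟨y₀, hy₀⟩
  · exact ⟨0, 0, eqOn_empty _ _⟩
  obtain ⟨k, c, h₀⟩ := h y₀ hy₀
  let V := {y | ∃ (k' : ℤ) (c' : ℝ), ((n : ℝ) ^ k' ≠ n ^ k ∨ c' ≠ c) ∧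
    f =ᶠ[𝓝 y] fun y => (n : ℝ) ^ k' * y + c'}
  have hV : IsOpen V := isOpen_iff_mem_nhds.2 fun _ ⟨k', c', hne, hy⟩ =>
    hy.eventuallyEq_nhds.mono fun _ hz => ⟨k', c', hne, hz⟩
  have hdisj : Disjoint {y | f =ᶠ[𝓝 y] fun y => (n : ℝ) ^ k * y + c} V := by
    refine Set.disjoint_left.2 fun y hy ⟨k', c', hne, hy'⟩ => ?_
    obtain ⟨hk, hc⟩ := affine_eq_of_eventuallyEq (hy.symm.trans hy')
    exact hne.elim (· hk.symm) (· hc.symm)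
  have hcover : U ⊆ {y | f =ᶠ[𝓝 y] fun y => (n : ℝ) ^ k * y + c} ∪ V := by
    intro y hy
    obtain ⟨k', c', hy'⟩ := h y hy
    by_cases heq : (n : ℝ) ^ k' = n ^ k ∧ c' = c
    · rw [heq.1, heq.2] at hy'
      exact Or.inl hy'
    · exact Or.inr ⟨k', c', not_and_or.1 heq, hy'⟩
  have hsub := hU.subset_left_of_subset_union isOpen_setOfPred_eventually_nhds hV hdisj hcover
    ⟨y₀, hy₀, h₀⟩
  exact ⟨k, c, fun y hy => EventuallyEq.eq_of_nhds (hsub hy)⟩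

def breaks (n : ℕ) (f : ℝ → ℝ) : Set ℝ := {x | ¬ AffAt n f x}

theorem notMem_breaks : x ∉ breaks n f ↔ AffAt n f x := not_not

theorem breaks_comp_subset [NeZero n] : breaks n (g ∘ f) ⊆ breaks n f ∪ f ⁻¹' breaks n g := by
  intro x hx
  by_contra h
  simp only [mem_union, mem_preimage, not_or, notMem_breaks] at h
  exact hx (h.2.comp h.1)

theorem add_one_mem_breaks_iff [NeZero n] (hf : ∀ y, f (y + 1) = f y + 1) :
    x + 1 ∈ breaks n f ↔ x ∈ breaks n f :=
  (affAt_add_one_iff hf).not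

end AffAt

section PL

variable {n : ℕ} {f g : ℝ → ℝ}

structure IsPL (n : ℕ) (f : ℝ → ℝ) : Prop where
  strictMono : StrictMono f
  mapsTo : MapsTo f (zpows n) (zpows n)
  breaks_subset : breaks n f ⊆ zpows n
  finite_breaks_inter_Icc : ∀ a b, (breaks n f ∩ Icc a b).Finite

theorem const_mem_zpows (hn : 1 < n) (hf : MapsTo f (zpows n) (zpows n)) {U : Set ℝ}
    (hU : IsOpen U) (hne : U.Nonempty) {k : ℤ} {c : ℝ}
    (hfU : EqOn f (fun y => (n : ℝ) ^ k * y + c) U) : c ∈ zpows n := by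
  have : NeZero n := ⟨by omega⟩
  obtain ⟨q, hq, hqU⟩ := (dense_zpows hn).exists_mem_open hU hne
  have hfq : (n : ℝ) ^ k * q + c ∈ zpows n := by simpa [hfU hqU] using hf hq
  simpa using (zpowsSubring n).sub_mem hfq ((zpowsSubring n).mul_mem (zpow_mem_zpows n k) hq)

theorem IsPL.mem_zpows_of_apply_mem (hn : 1 < n) (hf : IsPL n f) {x : ℝ}
    (hx : f x ∈ zpows n) : x ∈ zpows n := by
  have : NeZero n := ⟨by omega⟩
  by_cases hb : x ∈ breaks n f
  · exact hf.breaks_subset hb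
  obtain ⟨k, c, hfx⟩ := notMem_breaks.1 hb
  obtain ⟨U, hfU, hUo, hxU⟩ := eventually_nhds_iff.1 hfx
  have hc := const_mem_zpows hn hf.mapsTo hUo ⟨x, hxU⟩ hfU
  have hx' : (n : ℝ) ^ k * x + c ∈ zpows n := by simpa [hfU x hxU] using hx
  have h := (zpowsSubring n).mul_mem (zpow_mem_zpows n (-k)) ((zpowsSubring n).sub_mem hx' hc)
  rwa [add_sub_cancel_right, ← mul_assoc, ← zpow_add₀ (NeZero.ne _), neg_add_cancel, zpow_zero,
    one_mul] at h

theorem isPL_id : IsPL n id := by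
  have hb : breaks n id = ∅ :=
    eq_empty_of_forall_notMem fun _ hx => hx ⟨0, 0, Eventually.of_forall fun _ => by simp⟩
  exact ⟨strictMono_id, mapsTo_id _, by simp [hb], by simp [hb]⟩

theorem IsPL.comp (hn : 1 < n) (hg : IsPL n g) (hf : IsPL n f) : IsPL n (g ∘ f) := by
  have : NeZero n := ⟨by omega⟩
  refine ⟨hg.strictMono.comp hf.strictMono, hg.mapsTo.comp hf.mapsTo, ?_, fun a b => ?_⟩
  · exact breaks_comp_subset.trans <| union_subset hf.breaks_subset
      fun x hx => hf.mem_zpows_of_apply_mem hn (hg.breaks_subset hx)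
  · refine ((hf.finite_breaks_inter_Icc a b).union
      (hf.strictMono.finite_preimage_inter_Icc hg.finite_breaks_inter_Icc a b)).subset ?_
    rw [← union_inter_distrib_right]
    exact inter_subset_inter_left _ breaks_comp_subset

theorem IsPL.iterate (hn : 1 < n) (hf : IsPL n f) : ∀ j : ℕ, IsPL n f^[j]
  | 0 => isPL_id
  | j + 1 => by
    rw [iterate_succ']
    exact hf.comp hn (hf.iterate hn j)

theorem isPL_of_circPL (hmono : StrictMono f) (hPL : CircPL n 1 f)
    (hD : ∀ q ∈ zpows n, f q ∈ zpows n) : IsPL n f := by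
  obtain ⟨B, hBfin, hBper, hBD, hB⟩ := hPL
  have hbB : breaks n f ⊆ B := fun x hx =>
    by_contra fun hxB => hx (affAt_iff_exists_pos.2 (hB x hxB))
  exact ⟨hmono, hD, hbB.trans hBD, fun a b =>
    (finite_inter_Icc_of_add_one_mem hBfin hBper a b).subset (inter_subset_inter_left _ hbB)⟩

theorem IsPL.circPL [NeZero n] (hf : IsPL n f) (hper : ∀ x, f (x + 1) = f x + 1) :
    CircPL n 1 f :=
  ⟨breaks n f,
    (hf.finite_breaks_inter_Icc 0 1).subset (inter_subset_inter_right _ Ico_subset_Icc_self),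
    fun x hx => ⟨(add_one_mem_breaks_iff hper).2 hx,
      (add_one_mem_breaks_iff hper (x := x - 1)).1 (by rwa [sub_add_cancel])⟩,
    hf.breaks_subset, fun x hx => affAt_iff_exists_pos.1 (notMem_breaks.1 hx)⟩

end PL

theorem map_add_intCast_of_map_add_one {f : ℝ → ℝ} {d : ℝ} (hf : ∀ x, f (x + 1) = f x + d)
    (x : ℝ) (j : ℤ) : f (x + j) = f x + j * d := by
  simpa using AddConstMapClass.map_add_int' (⟨f, hf⟩ : AddConstMap ℝ ℝ 1 d) x j

theorem iterate_map_add_one {f : ℝ → ℝ} {d : ℕ} (hf : ∀ x, f (x + 1) = f x + d) :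
    ∀ (j : ℕ) (x : ℝ), f^[j] (x + 1) = f^[j] x + (d : ℝ) ^ j
  | 0, x => by simp
  | j + 1, x => by
    rw [iterate_succ_apply, iterate_succ_apply, hf]
    have := map_add_intCast_of_map_add_one (iterate_map_add_one hf j) (f x) d
    push_cast at this
    rw [this, pow_succ]
    ring

theorem exists_iterate_conj {n : ℕ} {E G : ℝ → ℝ} {m : ℤ} (hG : ∀ y, G (y + 1) = G y + n)
    (hEG : ∀ x, E (n * x) = G (E x) + m) :
    ∀ j : ℕ, ∃ C : ℝ, ∀ x, E ((n : ℝ) ^ j * x) = G^[j] (E x) + C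
  | 0 => ⟨0, fun x => by simp⟩
  | j + 1 => by
    obtain ⟨C, hC⟩ := exists_iterate_conj hG hEG j
    refine ⟨m * n ^ j + C, fun x => ?_⟩
    rw [pow_succ, mul_assoc, hC, hEG,
      map_add_intCast_of_map_add_one (iterate_map_add_one hG j), ← iterate_succ_apply]
    ring

section Conjugation

variable {n : ℕ} {E : ℝ ≃o ℝ} {F G : ℝ → ℝ}

/-- `E` lifts a homeomorphism `h` of the circle and `G` lifts `h ν_n h⁻¹`, where `ν_n` is
multiplication by `n`. -/
structure MulConjPL (n : ℕ) (E : ℝ ≃o ℝ) (G : ℝ → ℝ) : Prop where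
  map_add_one : ∀ x, E (x + 1) = E x + 1
  mapsTo : MapsTo E (zpows n) (zpows n)
  mapsTo_symm : MapsTo E.symm (zpows n) (zpows n)
  isPL : IsPL n G
  exists_conj : ∃ m : ℤ, ∀ x, E (n * x) = G (E x) + m

theorem MulConjPL.pl_map_add_one (hEG : MulConjPL n E G) (y : ℝ) : G (y + 1) = G y + n := by
  obtain ⟨m, hm⟩ := hEG.exists_conj
  obtain ⟨x, rfl⟩ := E.surjective y
  have h := hm (x + 1)
  have hshift := map_add_intCast_of_map_add_one hEG.map_add_one (n * x) n
  push_cast at hshift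
  rw [mul_add, mul_one, hshift, hm, hEG.map_add_one] at h
  linarith

theorem MulConjPL.exists_iterate_conj_affine [NeZero n] (hEG : MulConjPL n E G) (k : ℤ)
    {c : ℝ} (hc : c ∈ zpows n) :
    ∃ (b t : ℕ) (C : ℝ), ∀ u, G^[b] (E ((n : ℝ) ^ k * u + c)) = G^[t] (E u) + C := by
  obtain ⟨m, hm⟩ := hEG.exists_conj
  obtain ⟨b, N, hbk, hN⟩ := exists_pow_mul_eq_intCast hc k
  obtain ⟨t, ht⟩ : ∃ t : ℕ, (t : ℤ) = b + k := ⟨(b + k).toNat, Int.toNat_of_nonneg (by omega)⟩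
  obtain ⟨Cb, hCb⟩ := exists_iterate_conj hEG.pl_map_add_one hm b
  obtain ⟨Ct, hCt⟩ := exists_iterate_conj hEG.pl_map_add_one hm t
  refine ⟨b, t, Ct + N - Cb, fun u => ?_⟩
  -- `N = n ^ b * c` is an integer, so it passes through `E`.
  have hpow : (n : ℝ) ^ b * ((n : ℝ) ^ k * u + c) = (n : ℝ) ^ t * u + N := by
    rw [mul_add, ← mul_assoc, hN, ← zpow_natCast, ← zpow_natCast, ← zpow_add₀ (NeZero.ne _), ht]
  have h := hCb ((n : ℝ) ^ k * u + c)
  rw [hpow, map_add_intCast_of_map_add_one hEG.map_add_one, hCt] at h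
  linarith

theorem MulConjPL.exists_breaks_conj_inter_subset (hn : 1 < n) (hEG : MulConjPL n E G)
    (hFc : Continuous F) (hFD : MapsTo F (zpows n) (zpows n)) {U : Set ℝ} (hUo : IsOpen U)
    (hU : IsPreconnected U) (hFU : ∀ u ∈ U, AffAt n F u) :
    ∃ b t : ℕ, breaks n (E ∘ F ∘ E.symm) ∩ E.symm ⁻¹' U ⊆
      breaks n G^[t] ∪ (E ∘ F ∘ E.symm) ⁻¹' breaks n G^[b] := by
  have : NeZero n := ⟨by omega⟩
  rcases U.eq_empty_or_nonempty with rfl | hne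
  · exact ⟨0, 0, by simp⟩
  obtain ⟨k, c, hFU⟩ := exists_eqOn_of_isPreconnected hUo hU hFU
  obtain ⟨b, t, C, hbt⟩ := hEG.exists_iterate_conj_affine k (const_mem_zpows hn hFD hUo hne hFU)
  refine ⟨b, t, fun y ⟨hy, hyU⟩ => ?_⟩
  by_contra h
  simp only [mem_union, mem_preimage, not_or, notMem_breaks] at h
  have hid : (fun z => G^[t] z + C) =ᶠ[𝓝 y] G^[b] ∘ (E ∘ F ∘ E.symm) := by
    filter_upwards [(hUo.preimage E.symm.continuous).mem_nhds hyU] with z hz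
    simp [hFU hz, hbt]
  have hΦc : Continuous (E ∘ F ∘ E.symm) := E.continuous.comp (hFc.comp E.symm.continuous)
  exact hy (AffAt.of_comp (((affAt_add_const_iff C).2 h.1).congr hid) h.2 hΦc.continuousAt)

theorem MulConjPL.breaks_conj_subset (hn : 1 < n) (hEG : MulConjPL n E G) (hF : IsPL n F)
    (hFc : Continuous F) : breaks n (E ∘ F ∘ E.symm) ⊆ zpows n := by
  intro x hx
  by_cases hu : E.symm x ∈ breaks n F
  · simpa using hEG.mapsTo (hF.breaks_subset hu)
  obtain ⟨a, b, hab, hsub⟩ :=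
    mem_nhds_iff_exists_Ioo_subset.1 (isOpen_setOf_affAt.mem_nhds (notMem_breaks.1 hu))
  obtain ⟨j, l, hjl⟩ := hEG.exists_breaks_conj_inter_subset hn hFc hF.mapsTo isOpen_Ioo
    isPreconnected_Ioo hsub
  rcases hjl ⟨hx, hab⟩ with h | h
  · exact (hEG.isPL.iterate hn l).breaks_subset h
  · have hFx := hEG.mapsTo_symm ((hEG.isPL.iterate hn j).breaks_subset h)
    simp only [comp_apply, OrderIso.symm_apply_apply] at hFx
    simpa using hEG.mapsTo (hF.mem_zpows_of_apply_mem hn hFx)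

theorem MulConjPL.finite_breaks_conj_inter_Icc (hn : 1 < n) (hEG : MulConjPL n E G)
    (hF : IsPL n F) (hFc : Continuous F) (p q : ℝ) :
    (breaks n (E ∘ F ∘ E.symm) ∩ Icc p q).Finite := by
  have hΦ : StrictMono (E ∘ F ∘ E.symm) :=
    E.strictMono.comp (hF.strictMono.comp E.symm.strictMono)
  have hfin (b t : ℕ) (p q : ℝ) :
      ((breaks n G^[t] ∪ (E ∘ F ∘ E.symm) ⁻¹' breaks n G^[b]) ∩ Icc p q).Finite := by
    rw [union_inter_distrib_right]
    exact ((hEG.isPL.iterate hn t).finite_breaks_inter_Icc p q).union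
      (hΦ.finite_preimage_inter_Icc (hEG.isPL.iterate hn b).finite_breaks_inter_Icc p q)
  rw [inter_comm]
  refine isCompact_Icc.finite_inter_of_forall_mem_nhds fun x _ => ?_
  obtain ⟨a, b, hu, hS⟩ := exists_Ioo_inter_subset_singleton hF.finite_breaks_inter_Icc (E.symm x)
  obtain ⟨b₁, t₁, hl⟩ := hEG.exists_breaks_conj_inter_subset hn hFc hF.mapsTo isOpen_Ioo
    isPreconnected_Ioo (U := Ioo a (E.symm x))
    fun v hv => notMem_breaks.1 fun hb => hv.2.ne (hS ⟨hb, hv.1, hv.2.trans hu.2⟩)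
  obtain ⟨b₂, t₂, hr⟩ := hEG.exists_breaks_conj_inter_subset hn hFc hF.mapsTo isOpen_Ioo
    isPreconnected_Ioo (U := Ioo (E.symm x) b)
    fun v hv => notMem_breaks.1 fun hb => hv.1.ne' (hS ⟨hb, hu.1.trans hv.1, hv.2⟩)
  refine ⟨E.symm ⁻¹' Ioo a b, E.symm.continuous.continuousAt.preimage_mem_nhds
    (Ioo_mem_nhds hu.1 hu.2), (((hfin b₁ t₁ (E a) (E b)).union (hfin b₂ t₂ (E a) (E b))).insert
      x).subset ?_⟩
  rintro y ⟨hyab, hy⟩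
  have hyI : y ∈ Icc (E a) (E b) := ⟨E.le_symm_apply.1 hyab.1.le, E.symm_apply_le.1 hyab.2.le⟩
  rcases lt_trichotomy (E.symm y) (E.symm x) with h | h | h
  · exact Or.inr (Or.inl ⟨hl ⟨hy, hyab.1, h⟩, hyI⟩)
  · exact Or.inl (E.symm.injective h)
  · exact Or.inr (Or.inr ⟨hr ⟨hy, h, hyab.2⟩, hyI⟩)

theorem IsPL.conj (hn : 1 < n) (hEG : MulConjPL n E G) (hF : IsPL n F) (hFc : Continuous F) :
    IsPL n (E ∘ F ∘ E.symm) :=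
  ⟨E.strictMono.comp (hF.strictMono.comp E.symm.strictMono),
    hEG.mapsTo.comp (hF.mapsTo.comp hEG.mapsTo_symm), hEG.breaks_conj_subset hn hF hFc,
    hEG.finite_breaks_conj_inter_Icc hn hF hFc⟩

end Conjugation

theorem exists_int_eq_add_of_coe_eq {a b : ℝ} (h : (a : AddCircle (1 : ℝ)) = b) :
    ∃ j : ℤ, a = b + j := by
  obtain ⟨j, hj⟩ := (AddCircle.coe_eq_zero_iff (p := (1 : ℝ))).1
    (by rw [AddCircle.coe_sub, h, sub_self] : ((a - b : ℝ) : AddCircle (1 : ℝ)) = 0)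
  exact ⟨j, by simp only [zsmul_eq_mul, mul_one] at hj; linarith⟩

theorem exists_forall_eq_intCast_of_continuous {φ : ℝ → ℝ} (hφ : Continuous φ)
    (h : ∀ x, ∃ j : ℤ, φ x = j) : ∃ j : ℤ, ∀ x, φ x = j := by
  choose ψ hψ using h
  have hψc : Continuous ψ := by
    rw [Int.isClosedEmbedding_coe_real.continuous_iff]
    simpa [comp_def, ← hψ] using hφ
  exact ⟨ψ 0, fun x => by rw [hψ, PreconnectedSpace.constant inferInstance hψc]⟩

theorem mapsTo_zpows_two_of_lift {h : AddCircle (1 : ℝ) → AddCircle (1 : ℝ)} {E : ℝ → ℝ}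
    (hE : ∀ x : ℝ, h x = E x) (hh : MapsTo h dyadicCircle dyadicCircle) :
    MapsTo E (zpows 2) (zpows 2) := by
  intro q hq
  obtain ⟨r, hr, hEr⟩ := hh ⟨q, hq, rfl⟩
  rw [hE] at hEr
  obtain ⟨j, hj⟩ := exists_int_eq_add_of_coe_eq hEr
  rw [hj]
  exact (zpowsSubring 2).add_mem hr (intCast_mem _ j)

theorem OrderIso.symm_apply_add_one {E : ℝ ≃o ℝ} (hE1 : ∀ x, E (x + 1) = E x + 1) (x : ℝ) :
    E.symm (x + 1) = E.symm x + 1 :=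
  E.symm_apply_eq.2 (by rw [hE1, E.apply_symm_apply])

section Circle

variable {h h' : AddCircle (1 : ℝ) → AddCircle (1 : ℝ)} {E : ℝ ≃o ℝ}

theorem exists_mulConjPL_of_memTbar (hE1 : ∀ x, E (x + 1) = E x + 1)
    (hED : MapsTo E (zpows 2) (zpows 2)) (hEsD : MapsTo E.symm (zpows 2) (zpows 2))
    (hE : ∀ x : ℝ, h x = E x) (hE' : ∀ x : ℝ, h' x = E.symm x)
    (hconj : MemTbar 2 1 (h ∘ nu2 ∘ h')) : ∃ G, MulConjPL 2 E G := by
  obtain ⟨G, -, -, hG, -, hGmono, hGc, hGPL, hGD⟩ := hconj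
  have hint (x : ℝ) : ∃ j : ℤ, E (2 * x) - G (E x) = j := by
    have hx : ((E (2 * x) : ℝ) : AddCircle (1 : ℝ)) = G (E x) := by
      rw [← hE, ← hG, comp_apply, comp_apply, hE', E.symm_apply_apply, nu2, two_mul,
        AddCircle.coe_add]
    obtain ⟨j, hj⟩ := exists_int_eq_add_of_coe_eq hx
    exact ⟨j, by linarith⟩
  obtain ⟨m, hm⟩ := exists_forall_eq_intCast_of_continuous (φ := fun x => E (2 * x) - G (E x))
    ((E.continuous.comp (continuous_const_mul 2)).sub (hGc.comp E.continuous)) hint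
  exact ⟨G, hE1, hED, hEsD, isPL_of_circPL hGmono hGPL hGD, m,
    fun x => by push_cast; linarith [hm x]⟩

theorem memT_conj_of_memTbar (hE1 : ∀ x, E (x + 1) = E x + 1)
    (hED : MapsTo E (zpows 2) (zpows 2)) (hEsD : MapsTo E.symm (zpows 2) (zpows 2))
    (hE : ∀ x : ℝ, h x = E x) (hE' : ∀ x : ℝ, h' x = E.symm x)
    (hconj : MemTbar 2 1 (h ∘ nu2 ∘ h')) {f : AddCircle (1 : ℝ) → AddCircle (1 : ℝ)}
    (hf : MemT 2 1 f) : MemT 2 1 (h ∘ f ∘ h') := by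
  obtain ⟨G, hEG⟩ := exists_mulConjPL_of_memTbar hE1 hED hEsD hE hE' hconj
  obtain ⟨F, hFf, hF1, hFmono, hFsurj, hFPL, hFD⟩ := hf
  have hΦ := (isPL_of_circPL hFmono hFPL hFD).conj (by norm_num) hEG
    (hFmono.monotone.continuous_of_surjective hFsurj)
  have hΦ1 (x : ℝ) : (E ∘ F ∘ E.symm) (x + 1) = (E ∘ F ∘ E.symm) x + 1 := by
    simp only [comp_apply, E.symm_apply_add_one hE1, hF1, hE1]
  exact ⟨E ∘ F ∘ E.symm, fun x => by simp [hE, hE', hFf], hΦ1, hΦ.strictMono,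
    E.surjective.comp (hFsurj.comp E.symm.surjective), hΦ.circPL hΦ1, hΦ.mapsTo⟩

end Circle

theorem stmt_16_general (h h' : AddCircle (1 : ℝ) → AddCircle (1 : ℝ))
    (hh : OrientedHomeo 1 h)
    (hinv₁ : ∀ z, h' (h z) = z)
    (hdy : h '' dyadicCircle = dyadicCircle)
    (hconj₁ : MemTbar 2 1 (h ∘ nu2 ∘ h'))
    (hconj₂ : MemTbar 2 1 (h' ∘ nu2 ∘ h)) :
    (∀ f, MemT 2 1 f → MemT 2 1 (h ∘ f ∘ h')) ∧
    (∀ f, MemT 2 1 f → MemT 2 1 (h' ∘ f ∘ h)) := by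
  obtain ⟨H, hH, hH1, hHmono, hHsurj⟩ := hh
  let E := hHmono.orderIsoOfSurjective H hHsurj
  have hE (x : ℝ) : h x = E x := hH x
  have hE1 (x : ℝ) : E (x + 1) = E x + 1 := hH1 x
  have hE' (x : ℝ) : h' x = E.symm x := by rw [← hinv₁ (E.symm x), hE, E.apply_symm_apply]
  have hED : MapsTo E (zpows 2) (zpows 2) :=
    mapsTo_zpows_two_of_lift hE (mapsTo_iff_image_subset.2 hdy.subset)
  have hEsD : MapsTo E.symm (zpows 2) (zpows 2) := by
    refine mapsTo_zpows_two_of_lift hE' fun z hz => ?_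
    obtain ⟨w, hw, rfl⟩ := hdy.symm.subset hz
    rwa [hinv₁]
  exact ⟨fun f => memT_conj_of_memTbar hE1 hED hEsD hE hE' hconj₁,
    fun f => memT_conj_of_memTbar (E.symm_apply_add_one hE1) hEsD hED hE' hE hconj₂⟩

/-- **Lemma 6.3.** If `h` is an orientation-preserving homeomorphism of
`S¹` with `h(ℤ[1/2]) = ℤ[1/2]` such that `h ν₂ h⁻¹` and `h⁻¹ ν₂ h` are both
everywhere-defined elements of `T̄_{2,1}`, then `h` normalizes `T_{2,1}`:
`h T_{2,1} h⁻¹ = T_{2,1}`. -/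
theorem stmt_16 (h h' : AddCircle (1 : ℝ) → AddCircle (1 : ℝ))
    (hh : OrientedHomeo 1 h)
    (hinv₁ : ∀ z, h' (h z) = z) (hinv₂ : ∀ z, h (h' z) = z)
    (hdy : h '' dyadicCircle = dyadicCircle)
    (hconj₁ : MemTbar 2 1 (h ∘ nu2 ∘ h'))
    (hconj₂ : MemTbar 2 1 (h' ∘ nu2 ∘ h)) :
    (∀ f, MemT 2 1 f → MemT 2 1 (h ∘ f ∘ h')) ∧
    (∀ f, MemT 2 1 f → MemT 2 1 (h' ∘ f ∘ h)) :=
  stmt_16_general h h' hh hinv₁ hdy hconj₁ hconj₂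
end
end
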